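/- arXiv:math/0506094 — 11 statements merged into one kernel-verified Lean document; each statement's English description precedes it below -/
import Mathlib

section
/- Let A be a commutative local principal ideal ring, let n = n₁ + n₂, and let B ⊆ GL_n(A) be the subgroup of invertible upper triangular matrices. Suppose α and α' are block matrices of the form α = [[0, α₁],[α₂, 0]] and α' = [[0, α₁'],[α₂', 0]] with α₁, α₁' ∈ GL_{n₁}(A) and α₂, α₂' ∈ GL_{n₂}(A) (so the upper-left block is n₁×n₂). Then α and α' lie in the same double coset BαB = Bα'B if and only if α₁ and α₁' lie in the same double coset of upper triangular matrices in GL_{n₁}(A), and α₂ and α₂' lie in the same double coset of upper triangular matrices in GL_{n₂}(A). -/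
open Matrix

/-- A matrix is invertible upper triangular. -/
def IsUT {A : Type*} [CommRing A] {n : ℕ} (M : Matrix (Fin n) (Fin n) A) : Prop :=
  M.BlockTriangular id ∧ IsUnit M

/-- Two matrices lie in the same double coset for the subgroup of invertible
upper triangular matrices. -/
def SameDC {A : Type*} [CommRing A] {n : ℕ} (α α' : Matrix (Fin n) (Fin n) A) : Prop :=
  ∃ b c : Matrix (Fin n) (Fin n) A, IsUT b ∧ IsUT c ∧ b * α * c = α'

/-- The `n×n` matrix `[[X₁, α₁],[α₂, X₂]]` with upper-left block of size `n₁ × n₂`. -/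
def blk {A : Type*} [CommRing A] {n₁ n₂ : ℕ} (X₁ : Matrix (Fin n₁) (Fin n₂) A)
    (α₁ : Matrix (Fin n₁) (Fin n₁) A) (α₂ : Matrix (Fin n₂) (Fin n₂) A)
    (X₂ : Matrix (Fin n₂) (Fin n₁) A) : Matrix (Fin (n₁ + n₂)) (Fin (n₁ + n₂)) A :=
  Matrix.reindex finSumFinEquiv (finSumFinEquiv.trans (finCongr (Nat.add_comm n₂ n₁)))
    (Matrix.fromBlocks X₁ α₁ α₂ X₂)

/-!
Read rows through `Fin n₁ ⊕ Fin n₂ ≃ Fin (n₁ + n₂)` and columns through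
`Fin n₂ ⊕ Fin n₁ ≃ Fin (n₁ + n₂)`. Both identifications are monotone for the lexicographic order
on the sum, so an invertible upper triangular matrix becomes a block matrix `[[B₁₁, B₁₂], [0, B₂₂]]`
with invertible upper triangular diagonal blocks, and `blk 0 α₁ α₂ 0` becomes `[[0, α₁], [α₂, 0]]`.
In `B α C = α'` the upper-left block reads `B₁₂ α₂ C₁₁ = 0`, so `B₁₂ = 0` because `α₂ C₁₁` is
invertible; the off-diagonal blocks then read `B₁₁ α₁ C₂₂ = α₁'` and `B₂₂ α₂ C₁₁ = α₂'`.
Conversely, block-diagonal `B` and `C` assembled from witnesses for `α₁ ∼ α₁'` and `α₂ ∼ α₂'` work.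
-/

namespace Matrix

variable {R : Type*}

section Zero

variable [Zero R]

lemma blockTriangular_strictMono_comp_iff {m α β : Type*} [LinearOrder α] [Preorder β]
    {M : Matrix m m R} {b : m → α} {f : α → β} (hf : StrictMono f) :
    M.BlockTriangular (f ∘ b) ↔ M.BlockTriangular b :=
  forall₂_congr fun _ _ => imp_congr_left hf.lt_iff_lt

lemma blockTriangular_fromBlocks_toLex_iff {m n : Type*} [LinearOrder m] [LinearOrder n]
    {A : Matrix m m R} {B : Matrix m n R} {C : Matrix n m R} {D : Matrix n n R} :
    (fromBlocks A B C D).BlockTriangular toLex ↔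
      A.BlockTriangular id ∧ D.BlockTriangular id ∧ C = 0 := by
  constructor
  · intro h
    exact ⟨fun i j hij => h (Sum.Lex.inl_lt_inl_iff.2 hij),
      fun i j hij => h (Sum.Lex.inr_lt_inr_iff.2 hij),
      ext fun i j => h (Sum.Lex.inl_lt_inr j i)⟩
  · rintro ⟨hA, hD, rfl⟩ (i | i) (j | j) hij
    · exact hA (Sum.Lex.inl_lt_inl_iff.1 hij)
    · exact (Sum.Lex.not_inr_lt_inl hij).elim
    · rfl
    · exact hD (Sum.Lex.inr_lt_inr_iff.1 hij)

end Zero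

section Semiring

variable [Semiring R]

lemma reindex_mul_reindex_mul_reindex {l m n o : Type*} {l' m' n' o' : Type*}
    [Fintype m] [Fintype n] [Fintype m'] [Fintype n'] (eₗ : l ≃ l') (eₘ : m ≃ m') (eₙ : n ≃ n')
    (eₒ : o ≃ o') (X : Matrix l m R) (Y : Matrix m n R) (Z : Matrix n o R) :
    reindex eₗ eₘ X * reindex eₘ eₙ Y * reindex eₙ eₒ Z = reindex eₗ eₒ (X * Y * Z) := by
  simp only [reindex_apply, submatrix_mul_equiv]

variable {m n : Type*} [Fintype m] [Fintype n]

lemma fromBlocks_zero₂₁_mul_antidiagonal_mul_fromBlocks_zero₂₁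
    (B₁₁ : Matrix m m R) (B₁₂ : Matrix m n R) (B₂₂ : Matrix n n R)
    (α₁ : Matrix m m R) (α₂ : Matrix n n R)
    (C₁₁ : Matrix n n R) (C₁₂ : Matrix n m R) (C₂₂ : Matrix m m R) :
    fromBlocks B₁₁ B₁₂ 0 B₂₂ * fromBlocks 0 α₁ α₂ 0 * fromBlocks C₁₁ C₁₂ 0 C₂₂ =
      fromBlocks (B₁₂ * α₂ * C₁₁) (B₁₂ * α₂ * C₁₂ + B₁₁ * α₁ * C₂₂)
        (B₂₂ * α₂ * C₁₁) (B₂₂ * α₂ * C₁₂) := by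
  simp [fromBlocks_multiply]

end Semiring

end Matrix

lemma strictMono_finSumFinEquiv_comp_ofLex (m n : ℕ) :
    StrictMono (finSumFinEquiv ∘ ofLex : Fin m ⊕ₗ Fin n → Fin (m + n)) := by
  intro p q hpq
  obtain ⟨p, rfl⟩ := toLex.surjective p
  obtain ⟨q, rfl⟩ := toLex.surjective q
  rcases p with i | i <;> rcases q with j | j
  · exact Fin.strictMono_castAdd n (Sum.Lex.inl_lt_inl_iff.1 hpq)
  · exact Fin.lt_def.2 (by
      simp only [Function.comp_apply, ofLex_toLex, finSumFinEquiv_apply_left, Fin.val_castAdd,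
        finSumFinEquiv_apply_right, Fin.val_natAdd]
      omega)
  · exact (Sum.Lex.not_inr_lt_inl hpq).elim
  · exact Fin.strictMono_natAdd m (Sum.Lex.inr_lt_inr_iff.1 hpq)

lemma strictMono_finSumFinEquiv_trans_finCongr_comp_ofLex (m n : ℕ) :
    StrictMono (finSumFinEquiv.trans (finCongr (Nat.add_comm n m)) ∘ ofLex :
      Fin n ⊕ₗ Fin m → Fin (m + n)) :=
  (Fin.castOrderIso _).strictMono.comp (strictMono_finSumFinEquiv_comp_ofLex n m)

section Blocks

variable {A : Type*} [CommRing A] {m k N : ℕ} {e : Fin m ⊕ Fin k ≃ Fin N}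

lemma isUT_reindex_fromBlocks_iff (he : StrictMono (e ∘ ofLex))
    {B₁₁ : Matrix (Fin m) (Fin m) A} {B₁₂ : Matrix (Fin m) (Fin k) A}
    {B₂₁ : Matrix (Fin k) (Fin m) A} {B₂₂ : Matrix (Fin k) (Fin k) A} :
    IsUT (reindex e e (fromBlocks B₁₁ B₁₂ B₂₁ B₂₂)) ↔ IsUT B₁₁ ∧ IsUT B₂₂ ∧ B₂₁ = 0 := by
  have hlex : (e : Fin m ⊕ Fin k → Fin N) = (e ∘ ofLex) ∘ toLex := rfl
  rw [IsUT, blockTriangular_reindex_iff, Function.id_comp, hlex,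
    blockTriangular_strictMono_comp_iff he, blockTriangular_fromBlocks_toLex_iff]
  constructor
  · rintro ⟨⟨h₁₁, h₂₂, rfl⟩, hu⟩
    rw [reindex_apply, isUnit_submatrix_equiv, isUnit_fromBlocks_zero₂₁] at hu
    exact ⟨⟨h₁₁, hu.1⟩, ⟨h₂₂, hu.2⟩, rfl⟩
  · rintro ⟨⟨h₁₁, hu₁₁⟩, ⟨h₂₂, hu₂₂⟩, rfl⟩
    rw [reindex_apply, isUnit_submatrix_equiv, isUnit_fromBlocks_zero₂₁]
    exact ⟨⟨h₁₁, h₂₂, rfl⟩, hu₁₁, hu₂₂⟩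

lemma IsUT.exists_eq_reindex_fromBlocks (he : StrictMono (e ∘ ofLex))
    {b : Matrix (Fin N) (Fin N) A} (hb : IsUT b) :
    ∃ (B₁₁ : Matrix (Fin m) (Fin m) A) (B₁₂ : Matrix (Fin m) (Fin k) A)
      (B₂₂ : Matrix (Fin k) (Fin k) A),
      IsUT B₁₁ ∧ IsUT B₂₂ ∧ b = reindex e e (fromBlocks B₁₁ B₁₂ 0 B₂₂) := by
  obtain ⟨B, rfl⟩ := (reindex e e).surjective b
  rw [← fromBlocks_toBlocks B, isUT_reindex_fromBlocks_iff he] at hb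
  obtain ⟨h₁₁, h₂₂, h₂₁⟩ := hb
  exact ⟨_, _, _, h₁₁, h₂₂, by rw [← h₂₁, fromBlocks_toBlocks]⟩

end Blocks

theorem stmt0_general {A : Type*} [CommRing A]
    {n₁ n₂ : ℕ} (α₁ α₁' : Matrix (Fin n₁) (Fin n₁) A) (α₂ α₂' : Matrix (Fin n₂) (Fin n₂) A)
    (h₂ : IsUnit α₂) :
    SameDC (blk 0 α₁ α₂ 0) (blk 0 α₁' α₂' 0) ↔ SameDC α₁ α₁' ∧ SameDC α₂ α₂' := by
  have hr := strictMono_finSumFinEquiv_comp_ofLex n₁ n₂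
  have hu := strictMono_finSumFinEquiv_trans_finCongr_comp_ofLex n₁ n₂
  constructor
  · rintro ⟨b, c, hb, hc, h⟩
    obtain ⟨B₁₁, B₁₂, B₂₂, hB₁₁, hB₂₂, rfl⟩ := hb.exists_eq_reindex_fromBlocks hr
    obtain ⟨C₁₁, C₁₂, C₂₂, hC₁₁, hC₂₂, rfl⟩ := hc.exists_eq_reindex_fromBlocks hu
    rw [blk, blk, reindex_mul_reindex_mul_reindex, (reindex _ _).injective.eq_iff,
      fromBlocks_zero₂₁_mul_antidiagonal_mul_fromBlocks_zero₂₁, fromBlocks_inj] at h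
    obtain ⟨h₁₁, h₁₂, h₂₁, -⟩ := h
    have hB₁₂ : B₁₂ = 0 := by
      let _ := (h₂.mul hC₁₁.2).invertible
      exact mul_left_injective_of_invertible (α₂ * C₁₁) (by simpa [Matrix.mul_assoc] using h₁₁)
    subst hB₁₂
    exact ⟨⟨B₁₁, C₂₂, hB₁₁, hC₂₂, by simpa using h₁₂⟩, ⟨B₂₂, C₁₁, hB₂₂, hC₁₁, h₂₁⟩⟩
  · rintro ⟨⟨b₁, c₁, hb₁, hc₁, rfl⟩, ⟨b₂, c₂, hb₂, hc₂, rfl⟩⟩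
    refine ⟨_, _, (isUT_reindex_fromBlocks_iff (B₁₂ := 0) hr).2 ⟨hb₁, hb₂, rfl⟩,
      (isUT_reindex_fromBlocks_iff (B₁₂ := 0) hu).2 ⟨hc₂, hc₁, rfl⟩, ?_⟩
    rw [blk, blk, reindex_mul_reindex_mul_reindex,
      fromBlocks_zero₂₁_mul_antidiagonal_mul_fromBlocks_zero₂₁]
    simp

theorem stmt0 {A : Type*} [CommRing A] [IsLocalRing A] [IsPrincipalIdealRing A]
    {n₁ n₂ : ℕ} (α₁ α₁' : Matrix (Fin n₁) (Fin n₁) A) (α₂ α₂' : Matrix (Fin n₂) (Fin n₂) A)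
    (h₁ : IsUnit α₁) (h₁' : IsUnit α₁') (h₂ : IsUnit α₂) (h₂' : IsUnit α₂') :
    SameDC (blk 0 α₁ α₂ 0) (blk 0 α₁' α₂' 0) ↔ SameDC α₁ α₁' ∧ SameDC α₂ α₂' :=
  stmt0_general α₁ α₁' α₂ α₂' h₂
end

section
/- Let A be a commutative local principal ideal ring, let n = n₁ + n₂, and let B ⊆ GL_n(A) denote the invertible upper triangular matrices. Suppose α = [[X₁, α₁],[α₂, X₂]] and α' = [[X₁', α₁'],[α₂', X₂']] are block matrices with α₁, α₁' ∈ GL_{n₁}(A) invertible and α₂, α₂' ∈ GL_{n₂}(A) invertible (upper-left block X₁ of size n₁×n₂). Then α ∼ α' (same B-double coset) if and only if α₁ - X₁ α₂⁻¹ X₂ ∼ α₁' - X₁' α₂'⁻¹ X₂' as elements of GL_{n₁}(A) (double cosets of upper triangular matrices in GL_{n₁}(A)) and α₂ ∼ α₂' in GL_{n₂}(A). -/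
open Matrix

/-!
Under the splitting of rows as `n₁ + n₂` and of columns as `n₂ + n₁` that `blk` uses, an
invertible upper triangular matrix acting on the left (resp. right) is block upper triangular
with invertible upper triangular diagonal blocks `b₁, b₂` (resp. `c₂, c₁`). Such a pair moves
`α₂` to `b₂ α₂ c₂` and, since `α₂` is invertible, the Schur complement `α₁ - X₁ α₂⁻¹ X₂` to
`b₁ (α₁ - X₁ α₂⁻¹ X₂) c₁`; conversely the off-diagonal blocks of the two factors can be chosen to
send `X₁` and `X₂` to any prescribed `X₁'` and `X₂'`, and then the remaining block is forced by
the Schur complement.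
-/

namespace Matrix

variable {R : Type*} {m k : Type*}

theorem blockTriangular_comp_iff_of_strictMono {α β : Type*} [LinearOrder α] [Preorder β]
    [Zero R] {M : Matrix m m R} {b : m → α} {φ : α → β} (hφ : StrictMono φ) :
    M.BlockTriangular (φ ∘ b) ↔ M.BlockTriangular b := by
  simp only [BlockTriangular, Function.comp_apply, hφ.lt_iff_lt]

theorem blockTriangular_fromBlocks_iff {α : Type*} [Preorder α] [Zero R] {b : m ⊕ k → α}
    (hb : ∀ i j, b (.inl i) < b (.inr j)) {M₁₁ : Matrix m m R} {M₁₂ : Matrix m k R}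
    {M₂₁ : Matrix k m R} {M₂₂ : Matrix k k R} :
    (fromBlocks M₁₁ M₁₂ M₂₁ M₂₂).BlockTriangular b ↔
      M₁₁.BlockTriangular (b ∘ .inl) ∧ M₂₂.BlockTriangular (b ∘ .inr) ∧ M₂₁ = 0 := by
  constructor
  · intro h
    exact ⟨fun i j hij => h hij, fun i j hij => h hij, ext fun i j => h (hb j i)⟩
  · rintro ⟨h₁, h₂, rfl⟩ (i | i) (j | j) hij
    · exact h₁ hij
    · exact absurd hij (hb i j).asymm
    · rfl
    · exact h₂ hij

end Matrix

section BlockAlgebra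

variable {A : Type*} [CommRing A] {m k : Type*} [Fintype m] [Fintype k]

theorem fromBlocks_zero₂₁_mul_mul (b₁ : Matrix m m A) (u : Matrix m k A) (b₂ : Matrix k k A)
    (X₁ : Matrix m k A) (α₁ : Matrix m m A) (α₂ : Matrix k k A) (X₂ : Matrix k m A)
    (c₂ : Matrix k k A) (v : Matrix k m A) (c₁ : Matrix m m A) :
    fromBlocks b₁ u 0 b₂ * fromBlocks X₁ α₁ α₂ X₂ * fromBlocks c₂ v 0 c₁ =
      fromBlocks ((b₁ * X₁ + u * α₂) * c₂) ((b₁ * X₁ + u * α₂) * v + (b₁ * α₁ + u * X₂) * c₁)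
        (b₂ * α₂ * c₂) (b₂ * α₂ * v + b₂ * X₂ * c₁) := by
  simp only [fromBlocks_multiply, Matrix.zero_mul, zero_add, Matrix.mul_zero, add_zero]

variable [DecidableEq k]

theorem schur_fromBlocks_zero₂₁_mul_mul (b₁ : Matrix m m A) (u : Matrix m k A)
    {b₂ : Matrix k k A} (X₁ : Matrix m k A) (α₁ : Matrix m m A) {α₂ : Matrix k k A}
    (X₂ : Matrix k m A) {c₂ : Matrix k k A} (v : Matrix k m A) (c₁ : Matrix m m A)
    (hb₂ : IsUnit b₂) (hα₂ : IsUnit α₂) (hc₂ : IsUnit c₂) :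
    ((b₁ * X₁ + u * α₂) * v + (b₁ * α₁ + u * X₂) * c₁) -
        (b₁ * X₁ + u * α₂) * c₂ * (b₂ * α₂ * c₂)⁻¹ * (b₂ * α₂ * v + b₂ * X₂ * c₁) =
      b₁ * (α₁ - X₁ * α₂⁻¹ * X₂) * c₁ := by
  have := hb₂.invertible
  have := hα₂.invertible
  have := hc₂.invertible
  simp only [Matrix.mul_inv_rev, Matrix.mul_add, Matrix.add_mul, Matrix.sub_mul, Matrix.mul_sub,
    Matrix.mul_assoc, Matrix.mul_inv_cancel_left_of_invertible,
    Matrix.inv_mul_cancel_left_of_invertible]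
  abel

theorem exists_fromBlocks_zero₂₁_mul_mul_eq (b₁ : Matrix m m A) {b₂ : Matrix k k A}
    (X₁ : Matrix m k A) (α₁ : Matrix m m A) {α₂ : Matrix k k A} (X₂ : Matrix k m A)
    {c₂ : Matrix k k A} (c₁ : Matrix m m A) (hb₂ : IsUnit b₂) (hα₂ : IsUnit α₂)
    (hc₂ : IsUnit c₂) (X₁' : Matrix m k A) (X₂' : Matrix k m A) :
    ∃ u v, fromBlocks b₁ u 0 b₂ * fromBlocks X₁ α₁ α₂ X₂ * fromBlocks c₂ v 0 c₁ =
      fromBlocks X₁' (b₁ * (α₁ - X₁ * α₂⁻¹ * X₂) * c₁ + X₁' * (b₂ * α₂ * c₂)⁻¹ * X₂')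
        (b₂ * α₂ * c₂) X₂' := by
  have := hb₂.invertible
  have := hα₂.invertible
  have := hc₂.invertible
  set u := (X₁' - b₁ * X₁ * c₂) * c₂⁻¹ * α₂⁻¹
  set v := α₂⁻¹ * (b₂⁻¹ * X₂' - X₂ * c₁)
  have h₁₁ : (b₁ * X₁ + u * α₂) * c₂ = X₁' := by
    simp only [u, Matrix.add_mul, Matrix.sub_mul, Matrix.mul_assoc, Matrix.inv_mul_of_invertible,
      Matrix.mul_one]
    abel
  have h₂₂ : b₂ * α₂ * v + b₂ * X₂ * c₁ = X₂' := by
    simp only [v, Matrix.mul_sub, Matrix.mul_assoc, Matrix.mul_inv_cancel_left_of_invertible]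
    abel
  refine ⟨u, v, ?_⟩
  rw [fromBlocks_zero₂₁_mul_mul, ← schur_fromBlocks_zero₂₁_mul_mul b₁ u X₁ α₁ X₂ v c₁ hb₂ hα₂ hc₂,
    h₁₁, h₂₂, sub_add_cancel]

end BlockAlgebra

section UpperTriangular

variable {A : Type*} [CommRing A]

theorem isUT_reindex_iff {m k N : ℕ} (g : Fin m ⊕ Fin k ≃ Fin N)
    (hg : ∀ x, (g x : ℕ) = finSumFinEquiv x) (M : Matrix (Fin m ⊕ Fin k) (Fin m ⊕ Fin k) A) :
    IsUT (reindex g g M) ↔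
      ∃ b₁ u b₂, IsUT b₁ ∧ IsUT b₂ ∧ M = fromBlocks b₁ u 0 b₂ := by
  have hinl : StrictMono fun i => g (.inl i) := fun i j hij => by
    rw [Fin.lt_def, hg, hg]
    simpa using hij
  have hinr : StrictMono fun j => g (.inr j) := fun i j hij => by
    rw [Fin.lt_def, hg, hg]
    simpa using hij
  have hsep : ∀ i j, g (.inl i) < g (.inr j) := fun i j => by
    rw [Fin.lt_def, hg, hg]
    simp only [finSumFinEquiv_apply_left, finSumFinEquiv_apply_right, Fin.val_castAdd,
      Fin.val_natAdd]
    omega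
  rw [IsUT, blockTriangular_reindex_iff, isUnit_iff_isUnit_det, det_reindex_self,
    ← isUnit_iff_isUnit_det]
  constructor
  · rintro ⟨ht, hu⟩
    rw [← fromBlocks_toBlocks M] at ht hu
    obtain ⟨ht₁, ht₂, h₂₁⟩ := (blockTriangular_fromBlocks_iff hsep).1 ht
    rw [h₂₁] at hu
    obtain ⟨hu₁, hu₂⟩ := isUnit_fromBlocks_zero₂₁.1 hu
    exact ⟨_, _, _, ⟨(blockTriangular_comp_iff_of_strictMono hinl).1 ht₁, hu₁⟩,
      ⟨(blockTriangular_comp_iff_of_strictMono hinr).1 ht₂, hu₂⟩,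
      by rw [← h₂₁, fromBlocks_toBlocks]⟩
  · rintro ⟨b₁, u, b₂, ⟨ht₁, hu₁⟩, ⟨ht₂, hu₂⟩, rfl⟩
    exact ⟨(blockTriangular_fromBlocks_iff hsep).2
      ⟨(blockTriangular_comp_iff_of_strictMono hinl).2 ht₁,
        (blockTriangular_comp_iff_of_strictMono hinr).2 ht₂, rfl⟩,
      isUnit_fromBlocks_zero₂₁.2 ⟨hu₁, hu₂⟩⟩

theorem sameDC_reindex_iff {m k N : ℕ} (e : Fin m ⊕ Fin k ≃ Fin N) (f : Fin k ⊕ Fin m ≃ Fin N)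
    (he : ∀ x, (e x : ℕ) = finSumFinEquiv x) (hf : ∀ x, (f x : ℕ) = finSumFinEquiv x)
    (M M' : Matrix (Fin m ⊕ Fin k) (Fin k ⊕ Fin m) A) :
    SameDC (reindex e f M) (reindex e f M') ↔
      ∃ (b₁ : Matrix (Fin m) (Fin m) A) (u : Matrix (Fin m) (Fin k) A)
        (b₂ : Matrix (Fin k) (Fin k) A) (c₂ : Matrix (Fin k) (Fin k) A)
        (v : Matrix (Fin k) (Fin m) A) (c₁ : Matrix (Fin m) (Fin m) A),
        IsUT b₁ ∧ IsUT b₂ ∧ IsUT c₂ ∧ IsUT c₁ ∧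
          fromBlocks b₁ u 0 b₂ * M * fromBlocks c₂ v 0 c₁ = M' := by
  have hmul : ∀ (b : Matrix (Fin m ⊕ Fin k) (Fin m ⊕ Fin k) A)
      (c : Matrix (Fin k ⊕ Fin m) (Fin k ⊕ Fin m) A),
      reindex e e b * reindex e f M * reindex f f c = reindex e f (b * M * c) := by
    intro b c
    simp only [reindex_apply, submatrix_mul_equiv]
  constructor
  · rintro ⟨b, c, hb, hc, h⟩
    obtain ⟨b, rfl⟩ := (reindex e e).surjective b
    obtain ⟨c, rfl⟩ := (reindex f f).surjective c
    obtain ⟨b₁, u, b₂, hb₁, hb₂, rfl⟩ := (isUT_reindex_iff e he b).1 hb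
    obtain ⟨c₂, v, c₁, hc₂, hc₁, rfl⟩ := (isUT_reindex_iff f hf c).1 hc
    rw [hmul] at h
    exact ⟨b₁, u, b₂, c₂, v, c₁, hb₁, hb₂, hc₂, hc₁, (reindex e f).injective h⟩
  · rintro ⟨b₁, u, b₂, c₂, v, c₁, hb₁, hb₂, hc₂, hc₁, rfl⟩
    exact ⟨_, _, (isUT_reindex_iff e he _).2 ⟨b₁, u, b₂, hb₁, hb₂, rfl⟩,
      (isUT_reindex_iff f hf _).2 ⟨c₂, v, c₁, hc₂, hc₁, rfl⟩, hmul _ _⟩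

end UpperTriangular

theorem stmt1_general {A : Type*} [CommRing A]
    {n₁ n₂ : ℕ} (X₁ X₁' : Matrix (Fin n₁) (Fin n₂) A)
    (α₁ α₁' : Matrix (Fin n₁) (Fin n₁) A) (α₂ α₂' : Matrix (Fin n₂) (Fin n₂) A)
    (X₂ X₂' : Matrix (Fin n₂) (Fin n₁) A)
    (h₂ : IsUnit α₂) :
    SameDC (blk X₁ α₁ α₂ X₂) (blk X₁' α₁' α₂' X₂') ↔
      SameDC (α₁ - X₁ * α₂⁻¹ * X₂) (α₁' - X₁' * α₂'⁻¹ * X₂') ∧ SameDC α₂ α₂' := by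
  rw [blk, blk, sameDC_reindex_iff _ _ (fun _ => rfl) (fun x => by simp)]
  constructor
  · rintro ⟨b₁, u, b₂, c₂, v, c₁, hb₁, hb₂, hc₂, hc₁, h⟩
    rw [fromBlocks_zero₂₁_mul_mul] at h
    obtain ⟨rfl, rfl, rfl, rfl⟩ := fromBlocks_inj.1 h
    exact ⟨⟨b₁, c₁, hb₁, hc₁,
      (schur_fromBlocks_zero₂₁_mul_mul b₁ u X₁ α₁ X₂ v c₁ hb₂.2 h₂ hc₂.2).symm⟩,
      ⟨b₂, c₂, hb₂, hc₂, rfl⟩⟩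
  · rintro ⟨⟨b₁, c₁, hb₁, hc₁, hα₁⟩, ⟨b₂, c₂, hb₂, hc₂, rfl⟩⟩
    obtain ⟨u, v, h⟩ :=
      exists_fromBlocks_zero₂₁_mul_mul_eq b₁ X₁ α₁ X₂ c₁ hb₂.2 h₂ hc₂.2 X₁' X₂'
    rw [hα₁, sub_add_cancel] at h
    exact ⟨b₁, u, b₂, c₂, v, c₁, hb₁, hb₂, hc₂, hc₁, h⟩

theorem stmt1 {A : Type*} [CommRing A] [IsLocalRing A] [IsPrincipalIdealRing A]
    {n₁ n₂ : ℕ} (X₁ X₁' : Matrix (Fin n₁) (Fin n₂) A)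
    (α₁ α₁' : Matrix (Fin n₁) (Fin n₁) A) (α₂ α₂' : Matrix (Fin n₂) (Fin n₂) A)
    (X₂ X₂' : Matrix (Fin n₂) (Fin n₁) A)
    (h₁ : IsUnit α₁) (h₁' : IsUnit α₁') (h₂ : IsUnit α₂) (h₂' : IsUnit α₂') :
    SameDC (blk X₁ α₁ α₂ X₂) (blk X₁' α₁' α₂' X₂') ↔
      SameDC (α₁ - X₁ * α₂⁻¹ * X₂) (α₁' - X₁' * α₂'⁻¹ * X₂') ∧ SameDC α₂ α₂' :=
  stmt1_general X₁ X₁' α₁ α₁' α₂ α₂' X₂ X₂' h₂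
end

section
/- Let A be a commutative local principal ideal ring, α ∈ GL_n(A), and let F^j = α·F₀^j where F₀^j is the span of the first j standard basis vectors of A^n. For 0 ≤ i, j ≤ n, let [α]^{ij} denote the lower-left (n−i)×j submatrix of α (rows i+1,…,n and columns 1,…,j). Then the column space of [α]^{ij} (the A-submodule of A^{n−i} generated by the columns) is isomorphic as an A-module to F^j / (F^j ∩ F₀^i). -/
open Matrix

/-- `stdFlag A n i` is the submodule of `A^n` spanned by the first `i` standard
basis vectors, i.e. vectors vanishing at coordinates `≥ i`. -/
def stdFlag (A : Type*) [CommRing A] (n i : ℕ) : Submodule A (Fin n → A) where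
  carrier := {v | ∀ m : Fin n, i ≤ (m : ℕ) → v m = 0}
  add_mem' := by intro a b ha hb m hm; simp [ha m hm, hb m hm]
  zero_mem' := by intro m hm; rfl
  smul_mem' := by intro c v hv m hm; simp [hv m hm]

/-- The column space of a matrix: the submodule generated by its columns. -/
def colSpace {A : Type*} [CommRing A] {r c : ℕ} (M : Matrix (Fin r) (Fin c) A) :
    Submodule A (Fin r → A) :=
  Submodule.span A (Set.range fun j : Fin c => fun m : Fin r => M m j)

/-!
Let `π : Aⁿ → Aⁿ⁻ⁱ` forget the first `i` coordinates. Its kernel is `F₀^i`, and it maps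
`F^j = α F₀^j`, which is spanned by the first `j` columns of `α`, onto the column space of
`[α]^{ij}`. The first isomorphism theorem for `π` restricted to `F^j` gives the isomorphism.
-/

noncomputable def Submodule.quotientComapKerEquivMap {R M N : Type*} [Ring R] [AddCommGroup M]
    [Module R M] [AddCommGroup N] [Module R N] (F : Submodule R M) (f : M →ₗ[R] N) :
    (F ⧸ (LinearMap.ker f).comap F.subtype) ≃ₗ[R] F.map f :=
  (Submodule.quotEquivOfEq _ _ (LinearMap.ker_domRestrict F f).symm).trans
    (f.domRestrict F).quotKerEquivRange |>.trans
      (LinearEquiv.ofEq _ _ (LinearMap.range_domRestrict F f))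

section

variable {A : Type*} [CommRing A]

theorem one_submatrix_castLE_mulVec_apply {n j : ℕ} (hj : j ≤ n) (w : Fin j → A) (m : Fin n) :
    ((1 : Matrix (Fin n) (Fin n) A).submatrix id (Fin.castLE hj) *ᵥ w) m =
      if h : (m : ℕ) < j then w ⟨m, h⟩ else 0 := by
  simp only [mulVec, dotProduct, submatrix_apply, id_eq, one_apply, ite_mul, one_mul, zero_mul,
    Finset.sum_ite, Finset.sum_const_zero, add_zero]
  split_ifs with h
  · rw [Finset.sum_eq_single_of_mem ⟨m, h⟩ (by simp [Fin.ext_iff])]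
    intro k hk hne
    simp_all [Fin.ext_iff]
  · refine Finset.sum_eq_zero fun k hk => absurd (Finset.mem_filter.mp hk).2 ?_
    simp only [Fin.ext_iff, Fin.val_castLE]
    omega

theorem stdFlag_eq_range_mulVecLin {n j : ℕ} (hj : j ≤ n) :
    stdFlag A n j =
      LinearMap.range ((1 : Matrix (Fin n) (Fin n) A).submatrix id (Fin.castLE hj)).mulVecLin := by
  ext v
  simp only [LinearMap.mem_range, mulVecLin_apply]
  constructor
  · intro hv
    refine ⟨v ∘ Fin.castLE hj, funext fun m => ?_⟩
    rw [one_submatrix_castLE_mulVec_apply]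
    split_ifs with h
    · rfl
    · exact (hv m (not_lt.mp h)).symm
  · rintro ⟨w, rfl⟩ m hm
    rw [one_submatrix_castLE_mulVec_apply, dif_neg hm.not_gt]

theorem colSpace_eq_range_mulVecLin {r c : ℕ} (M : Matrix (Fin r) (Fin c) A) :
    colSpace M = LinearMap.range M.mulVecLin :=
  (range_mulVecLin M).symm

theorem map_mulVecLin_stdFlag {m n j : ℕ} (hj : j ≤ n) (M : Matrix (Fin m) (Fin n) A) :
    (stdFlag A n j).map M.mulVecLin = colSpace (M.submatrix id (Fin.castLE hj)) := by
  rw [stdFlag_eq_range_mulVecLin hj, ← LinearMap.range_comp, ← mulVecLin_mul,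
    colSpace_eq_range_mulVecLin]
  exact congrArg (fun N : Matrix (Fin m) (Fin j) A => LinearMap.range N.mulVecLin)
    (mul_submatrix_one (Equiv.refl _) _ M)

theorem map_funLeft_colSpace {k l m : ℕ} (f : Fin m → Fin k) (M : Matrix (Fin k) (Fin l) A) :
    (colSpace M).map (LinearMap.funLeft A A f) = colSpace (M.submatrix f id) := by
  rw [colSpace_eq_range_mulVecLin, colSpace_eq_range_mulVecLin, ← LinearMap.range_comp]
  rfl

def lowerRows (n i : ℕ) (r : Fin (n - i)) : Fin n := ⟨i + r, by omega⟩

theorem ker_funLeft_lowerRows (n i : ℕ) :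
    LinearMap.ker (LinearMap.funLeft A A (lowerRows n i)) = stdFlag A n i := by
  ext v
  simp only [LinearMap.mem_ker, funext_iff, LinearMap.funLeft_apply, Pi.zero_apply]
  constructor
  · intro h m hm
    simpa [lowerRows, Nat.add_sub_cancel' hm] using h ⟨m - i, by omega⟩
  · exact fun h r => h _ (Nat.le_add_right i r)

end

theorem stmt2 {A : Type*} [CommRing A]
    {n : ℕ} (α : Matrix (Fin n) (Fin n) A)
    (i j : ℕ) (hj : j ≤ n) :
    Nonempty
      ((colSpace (α.submatrix
          (fun r : Fin (n - i) => (⟨i + (r : ℕ), by have := r.2; omega⟩ : Fin n))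
          (Fin.castLE hj))) ≃ₗ[A]
        (↥(Submodule.map α.mulVecLin (stdFlag A n j)) ⧸
          Submodule.comap (Submodule.map α.mulVecLin (stdFlag A n j)).subtype
            (stdFlag A n i))) := by
  have himage : ((stdFlag A n j).map α.mulVecLin).map (LinearMap.funLeft A A (lowerRows n i)) =
      colSpace (α.submatrix (lowerRows n i) (Fin.castLE hj)) := by
    rw [map_mulVecLin_stdFlag hj, map_funLeft_colSpace]
    rfl
  rw [← ker_funLeft_lowerRows n i]
  exact ⟨(LinearEquiv.ofEq _ _ himage.symm).trans (Submodule.quotientComapKerEquivMap _ _).symm⟩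
end

section
/- Let A be a commutative local principal ideal ring of finite length k with maximal ideal generated by π (so π^k = 0, π^{k−1} ≠ 0), and let α ∈ GL_n(A). For each 1 ≤ i, j ≤ n, the subquotient (F^j ∩ F₀^i)/(F^{j−1} ∩ F₀^i + F^j ∩ F₀^{i−1}) is a cyclic A-module isomorphic to A/(π^{r_{ij}}) for a unique 0 ≤ r_{ij} ≤ k, and for every fixed j, the sum over i of r_{ij} equals k, and for every fixed i, the sum over j of r_{ij} equals k. -/
open Matrix

/-- The subquotient `(F^j ∩ F₀^i) / (F^{j-1} ∩ F₀^i + F^j ∩ F₀^{i-1})`, where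
`F₀` is the standard flag and `F = α F₀`. -/
abbrev interQuot (A : Type*) [CommRing A] {n : ℕ} (α : Matrix (Fin n) (Fin n) A)
    (i j : ℕ) :=
  ↥(Submodule.map α.mulVecLin (stdFlag A n j) ⊓ stdFlag A n i) ⧸
    Submodule.comap (Submodule.map α.mulVecLin (stdFlag A n j) ⊓ stdFlag A n i).subtype
      ((Submodule.map α.mulVecLin (stdFlag A n (j - 1)) ⊓ stdFlag A n i) ⊔
        (Submodule.map α.mulVecLin (stdFlag A n j) ⊓ stdFlag A n (i - 1)))

/-!
Every ideal of `A` is `(π ^ t)` for a unique `t ≤ k`. Both `F₀` and `F = α F₀` are flags of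
bases: `F (j + 1) = F j + A g` with `(F j : g) = 0`. Under `c ↦ c • g`, a subquotient `P / W`
of `F (j + 1)` with `P ∩ F j ⊆ W` becomes the subquotient `(P + F j : g) / (W + F j : g)` of
ideals, hence is isomorphic to `A / (π ^ (t' - t))`. For the subquotient at `(i, j)` these colon
ideals are `(F (j + 1) ∩ F₀ i + F j : g)`, increasing in `i` from `(F j : g) = 0` to
`(F (j + 1) : g) = A`, so the exponents telescope to `k` when summed over `i`. Exchanging the
roles of the two flags gives the same subquotient, hence the sum over `j`.
-/

open Submodule

section PowDvd

variable {A : Type*} [CommRing A] {π : A} {k : ℕ}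

theorem pow_dvd_pow_iff_of_pow_eq_zero (hk0 : π ^ k = 0) (hk1 : π ^ (k - 1) ≠ 0) {a b : ℕ}
    (hb : b ≤ k) : π ^ b ∣ π ^ a ↔ b ≤ a := by
  refine ⟨fun ⟨d, hd⟩ => ?_, pow_dvd_pow π⟩
  by_contra! hab
  apply hk1
  calc π ^ (k - 1) = π ^ (k - 1 - a) * π ^ a := by rw [← pow_add]; congr 1; omega
    _ = π ^ (k - 1 - a + b) * d := by rw [hd, ← mul_assoc, ← pow_add]
    _ = 0 := by rw [pow_eq_zero_of_le (by omega) hk0, zero_mul]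

theorem span_pow_le_span_pow_iff (hk0 : π ^ k = 0) (hk1 : π ^ (k - 1) ≠ 0) {a b : ℕ}
    (ha : a ≤ k) : Ideal.span {π ^ b} ≤ Ideal.span {π ^ a} ↔ a ≤ b := by
  rw [Ideal.span_singleton_le_span_singleton, pow_dvd_pow_iff_of_pow_eq_zero hk0 hk1 ha]

theorem eq_of_span_pow_eq_span_pow (hk0 : π ^ k = 0) (hk1 : π ^ (k - 1) ≠ 0) {a b : ℕ}
    (ha : a ≤ k) (hb : b ≤ k) (h : Ideal.span {π ^ a} = Ideal.span {π ^ b}) : a = b :=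
  le_antisymm ((span_pow_le_span_pow_iff hk0 hk1 ha).mp h.ge)
    ((span_pow_le_span_pow_iff hk0 hk1 hb).mp h.le)

theorem eq_of_equiv_quotient_span_pow (hk0 : π ^ k = 0) (hk1 : π ^ (k - 1) ≠ 0) {a b : ℕ}
    (ha : a ≤ k) (hb : b ≤ k)
    (e : (A ⧸ Ideal.span {π ^ a}) ≃ₗ[A] (A ⧸ Ideal.span {π ^ b})) : a = b := by
  refine eq_of_span_pow_eq_span_pow hk0 hk1 ha hb ?_
  rw [← Ideal.annihilator_quotient (I := Ideal.span {π ^ a}), e.annihilator_eq,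
    Ideal.annihilator_quotient]

open scoped Classical in
noncomputable def idealExp (π : A) (k : ℕ) (I : Ideal A) : ℕ :=
  Nat.findGreatest (fun t => I ≤ Ideal.span {π ^ t}) k

theorem idealExp_le (π : A) (k : ℕ) (I : Ideal A) : idealExp π k I ≤ k := by
  classical exact Nat.findGreatest_le k

theorem idealExp_span_pow (hk0 : π ^ k = 0) (hk1 : π ^ (k - 1) ≠ 0) {t : ℕ} (ht : t ≤ k) :
    idealExp π k (Ideal.span {π ^ t}) = t := by
  classical
  refine Nat.findGreatest_eq_iff.mpr ⟨ht, fun _ => le_rfl, fun s hts hsk hle => ?_⟩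
  exact (hts.trans_le ((span_pow_le_span_pow_iff hk0 hk1 hsk).mp hle)).false

theorem idealExp_bot (hk0 : π ^ k = 0) (hk1 : π ^ (k - 1) ≠ 0) :
    idealExp π k (⊥ : Ideal A) = k := by
  simpa [hk0] using idealExp_span_pow hk0 hk1 (le_refl k)

theorem idealExp_top (hk0 : π ^ k = 0) (hk1 : π ^ (k - 1) ≠ 0) :
    idealExp π k (⊤ : Ideal A) = 0 := by
  rw [← idealExp_span_pow hk0 hk1 (Nat.zero_le k), pow_zero, Ideal.span_singleton_one]

end PowDvd

section LocalPIR

variable {A : Type*} [CommRing A] [IsLocalRing A] {π : A} {k : ℕ}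

theorem exists_unit_mul_pow (hk0 : π ^ k = 0)
    (hmax : IsLocalRing.maximalIdeal A = Ideal.span {π}) (x : A) :
    ∃ (u : Aˣ) (t : ℕ), t ≤ k ∧ x = u * π ^ t := by
  classical
  set t := Nat.findGreatest (fun t => π ^ t ∣ x) k
  obtain ⟨c, hc⟩ : π ^ t ∣ x :=
    Nat.findGreatest_spec (P := fun t => π ^ t ∣ x) (Nat.zero_le k) (by simp)
  by_cases hcu : IsUnit c
  · exact ⟨hcu.unit, t, Nat.findGreatest_le k, by rw [hc, mul_comm, IsUnit.unit_spec]⟩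
  · have hcπ : c ∈ Ideal.span {π} := hmax ▸ hcu
    obtain ⟨d, rfl⟩ := Ideal.mem_span_singleton'.mp hcπ
    have htk : ¬ t < k := fun htk =>
      Nat.findGreatest_is_greatest (Nat.lt_succ_self t) htk ⟨d, by rw [hc, pow_succ]; ring⟩
    refine ⟨1, k, le_rfl, ?_⟩
    rw [hc, hk0, mul_zero, pow_eq_zero_of_le (not_lt.mp htk) hk0, zero_mul]

theorem mul_pow_mem_span_pow_iff (hk0 : π ^ k = 0) (hk1 : π ^ (k - 1) ≠ 0)
    (hmax : IsLocalRing.maximalIdeal A = Ideal.span {π}) {a b : ℕ} (hab : a ≤ b) (hb : b ≤ k)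
    (c : A) : c * π ^ a ∈ Ideal.span {π ^ b} ↔ c ∈ Ideal.span {π ^ (b - a)} := by
  obtain ⟨u, t, -, rfl⟩ := exists_unit_mul_pow hk0 hmax c
  simp only [Ideal.mem_span_singleton, mul_assoc, ← pow_add, Units.dvd_mul_left,
    pow_dvd_pow_iff_of_pow_eq_zero hk0 hk1 hb,
    pow_dvd_pow_iff_of_pow_eq_zero hk0 hk1 ((Nat.sub_le b a).trans hb)]
  omega

variable [IsPrincipalIdealRing A]

theorem exists_eq_span_pow (hk0 : π ^ k = 0)
    (hmax : IsLocalRing.maximalIdeal A = Ideal.span {π}) (I : Ideal A) :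
    ∃ t ≤ k, I = Ideal.span {π ^ t} := by
  obtain ⟨x, rfl⟩ := (IsPrincipalIdealRing.principal I).1
  obtain ⟨u, t, htk, rfl⟩ := exists_unit_mul_pow hk0 hmax x
  exact ⟨t, htk, Ideal.span_singleton_mul_left_unit u.isUnit _⟩

theorem span_pow_idealExp (hk0 : π ^ k = 0) (hk1 : π ^ (k - 1) ≠ 0)
    (hmax : IsLocalRing.maximalIdeal A = Ideal.span {π}) (I : Ideal A) :
    Ideal.span {π ^ idealExp π k I} = I := by
  obtain ⟨t, ht, rfl⟩ := exists_eq_span_pow hk0 hmax I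
  rw [idealExp_span_pow hk0 hk1 ht]

theorem idealExp_anti (hk0 : π ^ k = 0) (hk1 : π ^ (k - 1) ≠ 0)
    (hmax : IsLocalRing.maximalIdeal A = Ideal.span {π}) {I J : Ideal A} (h : J ≤ I) :
    idealExp π k I ≤ idealExp π k J := by
  rwa [← span_pow_le_span_pow_iff hk0 hk1 (idealExp_le π k I), span_pow_idealExp hk0 hk1 hmax,
    span_pow_idealExp hk0 hk1 hmax]

theorem nonempty_quotient_equiv_quotient_span_pow (hk0 : π ^ k = 0) (hk1 : π ^ (k - 1) ≠ 0)
    (hmax : IsLocalRing.maximalIdeal A = Ideal.span {π}) {I J : Ideal A} (hJI : J ≤ I) :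
    Nonempty ((I ⧸ Submodule.comap I.subtype J) ≃ₗ[A]
      A ⧸ Ideal.span {π ^ (idealExp π k J - idealExp π k I)}) := by
  have hI := span_pow_idealExp hk0 hk1 hmax I
  have hJ := span_pow_idealExp hk0 hk1 hmax J
  let φ : A →ₗ[A] I ⧸ Submodule.comap I.subtype J := (Submodule.comap I.subtype J).mkQ ∘ₗ
    LinearMap.toSpanSingleton A I
      ⟨π ^ idealExp π k I, hI.le (Ideal.mem_span_singleton_self _)⟩
  have hφ : Function.Surjective φ := by
    rintro ⟨x, hx⟩
    obtain ⟨c, rfl⟩ := Ideal.mem_span_singleton'.mp (hI.ge hx)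
    exact ⟨c, rfl⟩
  have hker : LinearMap.ker φ = Ideal.span {π ^ (idealExp π k J - idealExp π k I)} := by
    ext c
    rw [← mul_pow_mem_span_pow_iff hk0 hk1 hmax (idealExp_anti hk0 hk1 hmax hJI)
      (idealExp_le π k J), hJ]
    simp [φ]
  exact ⟨hker ▸ (φ.quotKerEquivOfSurjective hφ).symm⟩

end LocalPIR

section Subquotients

variable {A M : Type*} [CommRing A] [AddCommGroup M] [Module A M]

theorem nonempty_quotient_equiv_sup_quotient_sup {P W : Submodule A M} (Z : Submodule A M)
    (hWP : W ≤ P) (hPZ : P ⊓ Z ≤ W) :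
    Nonempty ((P ⧸ Submodule.comap P.subtype W) ≃ₗ[A]
      ((P ⊔ Z : Submodule A M) ⧸ Submodule.comap (P ⊔ Z).subtype (W ⊔ Z))) := by
  have hinf : P ⊓ (W ⊔ Z) = W := by
    rw [inf_comm, sup_inf_assoc_of_le Z hWP, inf_comm Z, sup_eq_left.mpr hPZ]
  have hsup : P ⊔ (W ⊔ Z) = P ⊔ Z := by rw [← sup_assoc, sup_eq_left.mpr hWP]
  have e := LinearMap.quotientInfEquivSupQuotient P (W ⊔ Z)
  rw [← Submodule.comap_inf, hinf, hsup] at e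
  exact ⟨e⟩

theorem nonempty_quotient_equiv_quotient_colon {X Y Z : Submodule A M} (g : M) (hYX : Y ≤ X)
    (hZY : Z ≤ Y) (hX : X ≤ Z ⊔ span A {g}) :
    Nonempty ((X ⧸ Submodule.comap X.subtype Y) ≃ₗ[A]
      (X.colon {g} ⧸ Submodule.comap (X.colon {g}).subtype (Y.colon {g}))) := by
  let φ : X.colon {g} →ₗ[A] X ⧸ Submodule.comap X.subtype Y :=
    (Submodule.comap X.subtype Y).mkQ ∘ₗ (LinearMap.toSpanSingleton A M g).restrict
      (fun _ hc => mem_colon_singleton.mp hc)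
  have hφ : Function.Surjective φ := by
    rintro ⟨⟨x, hx⟩⟩
    obtain ⟨z, hz, y, hy, rfl⟩ := Submodule.mem_sup.mp (hX hx)
    obtain ⟨c, rfl⟩ := Submodule.mem_span_singleton.mp hy
    have hcg : c • g ∈ X := (add_mem_cancel_left (hYX (hZY hz))).mp hx
    refine ⟨⟨c, mem_colon_singleton.mpr hcg⟩, (Submodule.Quotient.eq _).mpr ?_⟩
    change c • g - (z + c • g) ∈ Y
    simpa using Y.neg_mem (hZY hz)
  have hker : LinearMap.ker φ = Submodule.comap (X.colon {g}).subtype (Y.colon {g}) := by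
    ext c
    simp only [φ, LinearMap.mem_ker, LinearMap.comp_apply, Submodule.mkQ_apply,
      Submodule.Quotient.mk_eq_zero, Submodule.mem_comap, mem_colon_singleton]
    rfl
  exact ⟨hker ▸ (φ.quotKerEquivOfSurjective hφ).symm⟩

end Subquotients

theorem Finset.sum_range_tsub_of_antitone {f : ℕ → ℕ} (hf : Antitone f) (n : ℕ) :
    ∑ i ∈ Finset.range n, (f i - f (i + 1)) = f 0 - f n := by
  induction n with
  | zero => simp
  | succ m ih =>
    rw [Finset.sum_range_succ, ih]
    have := hf (Nat.zero_le m)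
    have := hf (Nat.le_add_right m 1)
    omega

section Flags

variable {A M M' : Type*} [CommRing A] [AddCommGroup M] [Module A M] [AddCommGroup M']
  [Module A M']

/-- `interQuot A α` is `flagQuot (fun j => (stdFlag A n j).map α.mulVecLin) (stdFlag A n)`. -/
abbrev flagQuot (F G : ℕ → Submodule A M) (i j : ℕ) :=
  ↥(F j ⊓ G i) ⧸ comap (F j ⊓ G i).subtype (F (j - 1) ⊓ G i ⊔ F j ⊓ G (i - 1))

theorem nonempty_flagQuot_equiv_flagQuot_swap (F G : ℕ → Submodule A M) (i j : ℕ) :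
    Nonempty (flagQuot F G i j ≃ₗ[A] flagQuot G F j i) := by
  have hP : F j ⊓ G i = G i ⊓ F j := inf_comm _ _
  have hW : F (j - 1) ⊓ G i ⊔ F j ⊓ G (i - 1) = G (i - 1) ⊓ F j ⊔ G i ⊓ F (j - 1) := by
    rw [sup_comm, inf_comm, inf_comm (F (j - 1))]
  unfold flagQuot
  rw [hP, hW]
  exact ⟨LinearEquiv.refl _ _⟩

structure IsFlagOfBasis {n : ℕ} (F : ℕ → Submodule A M) (g : Fin n → M) : Prop where
  bot : F 0 = ⊥
  top : F n = ⊤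
  mono : Monotone F
  succ : ∀ j : Fin n, F (j + 1) = F j ⊔ span A {g j}
  colon_eq_bot : ∀ j : Fin n, (F j).colon {g j} = ⊥

theorem IsFlagOfBasis.map {n : ℕ} {F : ℕ → Submodule A M} {g : Fin n → M}
    (hF : IsFlagOfBasis F g) {f : M →ₗ[A] M'} (hf : Function.Bijective f) :
    IsFlagOfBasis (fun i => (F i).map f) (fun j => f (g j)) where
  bot := by rw [hF.bot, Submodule.map_bot]
  top := by rw [hF.top, Submodule.map_top, LinearMap.range_eq_top.mpr hf.2]
  mono _ _ h := Submodule.map_mono (hF.mono h)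
  succ j := by rw [hF.succ, Submodule.map_sup, Submodule.map_span, Set.image_singleton]
  colon_eq_bot j := by
    ext c
    rw [mem_colon_singleton, ← map_smul, ← Submodule.mem_comap,
      Submodule.comap_map_eq_of_injective hf.1, ← mem_colon_singleton, hF.colon_eq_bot]

noncomputable def colonExp (π : A) (k : ℕ) (F G : ℕ → Submodule A M) (g : M) (j i : ℕ) :
    ℕ :=
  idealExp π k ((F (j + 1) ⊓ G i ⊔ F j).colon {g})

variable [IsLocalRing A] [IsPrincipalIdealRing A] {π : A} {k : ℕ}

theorem nonempty_flagQuot_succ_equiv (hk0 : π ^ k = 0) (hk1 : π ^ (k - 1) ≠ 0)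
    (hmax : IsLocalRing.maximalIdeal A = Ideal.span {π}) {F G : ℕ → Submodule A M} {g : M}
    {i j : ℕ} (hF : F (j + 1) = F j ⊔ span A {g}) (hG : G i ≤ G (i + 1)) :
    Nonempty (flagQuot F G (i + 1) (j + 1) ≃ₗ[A]
      A ⧸ Ideal.span {π ^ (colonExp π k F G g j i - colonExp π k F G g j (i + 1))}) := by
  have hFj : F j ≤ F (j + 1) := hF ▸ le_sup_left
  have hWP : F j ⊓ G (i + 1) ⊔ F (j + 1) ⊓ G i ≤ F (j + 1) ⊓ G (i + 1) :=
    sup_le (inf_le_inf_right _ hFj) (inf_le_inf_left _ hG)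
  have hPF : F (j + 1) ⊓ G (i + 1) ⊓ F j ≤ F j ⊓ G (i + 1) ⊔ F (j + 1) ⊓ G i :=
    le_sup_of_le_left (le_inf inf_le_right (inf_le_left.trans inf_le_right))
  have hWF : F j ⊓ G (i + 1) ⊔ F (j + 1) ⊓ G i ⊔ F j = F (j + 1) ⊓ G i ⊔ F j := by
    rw [sup_right_comm, sup_eq_right.mpr (inf_le_left : F j ⊓ G (i + 1) ≤ F j), sup_comm]
  obtain ⟨e₁⟩ := nonempty_quotient_equiv_sup_quotient_sup (F j) hWP hPF
  obtain ⟨e₂⟩ := nonempty_quotient_equiv_quotient_colon g (sup_le_sup_right hWP (F j))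
    le_sup_right (sup_le (inf_le_left.trans hF.le) le_sup_left)
  obtain ⟨e₃⟩ := nonempty_quotient_equiv_quotient_span_pow hk0 hk1 hmax
    (colon_mono (sup_le_sup_right hWP (F j)) (subset_refl {g}))
  rw [colonExp, colonExp, ← hWF]
  exact ⟨e₁ ≪≫ₗ e₂ ≪≫ₗ e₃⟩

theorem sum_colonExp_sub_colonExp (hk0 : π ^ k = 0) (hk1 : π ^ (k - 1) ≠ 0)
    (hmax : IsLocalRing.maximalIdeal A = Ideal.span {π}) {F G : ℕ → Submodule A M} {g : M}
    {j n : ℕ} (hF : F (j + 1) = F j ⊔ span A {g}) (hg : (F j).colon {g} = ⊥) (hG0 : G 0 = ⊥)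
    (hGn : G n = ⊤) (hG : Monotone G) :
    ∑ i ∈ Finset.range n, (colonExp π k F G g j i - colonExp π k F G g j (i + 1)) = k := by
  have hanti : Antitone (colonExp π k F G g j) := fun a b hab =>
    idealExp_anti hk0 hk1 hmax (colon_mono (sup_le_sup_right (inf_le_inf_left _ (hG hab)) _)
      (subset_refl {g}))
  have h0 : colonExp π k F G g j 0 = k := by
    rw [colonExp, hG0, inf_bot_eq, bot_sup_eq, hg, idealExp_bot hk0 hk1]
  have hn : colonExp π k F G g j n = 0 := by
    have hgF : {g} ⊆ (F (j + 1) : Set M) := by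
      simpa [hF] using Submodule.mem_sup_right (mem_span_singleton_self g)
    rw [colonExp, hGn, inf_top_eq, sup_eq_left.mpr (hF ▸ le_sup_left),
      (colon_eq_top_iff_subset _).mpr hgF, idealExp_top hk0 hk1]
  rw [Finset.sum_range_tsub_of_antitone hanti, h0, hn, Nat.sub_zero]

theorem IsFlagOfBasis.exists_flagQuot_equiv (hk0 : π ^ k = 0) (hk1 : π ^ (k - 1) ≠ 0)
    (hmax : IsLocalRing.maximalIdeal A = Ideal.span {π}) {n : ℕ} {F G : ℕ → Submodule A M}
    {f g : Fin n → M} (hF : IsFlagOfBasis F f) (hG : IsFlagOfBasis G g) :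
    ∃ r : Fin n → Fin n → ℕ,
      (∀ i j : Fin n, r i j ≤ k ∧
        Nonempty (flagQuot F G (i + 1) (j + 1) ≃ₗ[A] A ⧸ Ideal.span {π ^ r i j})) ∧
      (∀ j : Fin n, ∑ i : Fin n, r i j = k) ∧ (∀ i : Fin n, ∑ j : Fin n, r i j = k) := by
  have hequivF (i j : Fin n) := nonempty_flagQuot_succ_equiv hk0 hk1 hmax (hF.succ j)
    (G := G) (hG.mono (Nat.le_add_right i 1))
  have hequivG (i j : Fin n) := nonempty_flagQuot_succ_equiv hk0 hk1 hmax (hG.succ i)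
    (G := F) (hF.mono (Nat.le_add_right j 1))
  have hsub_le (F G : ℕ → Submodule A M) (g : M) (j i : ℕ) :
      colonExp π k F G g j i - colonExp π k F G g j (i + 1) ≤ k :=
    (Nat.sub_le _ _).trans (idealExp_le π k _)
  have hexp_swap (i j : Fin n) : colonExp π k F G (f j) j i - colonExp π k F G (f j) j (i + 1) =
      colonExp π k G F (g i) i j - colonExp π k G F (g i) i (j + 1) := by
    obtain ⟨e₁⟩ := hequivF i j
    obtain ⟨e₂⟩ := hequivG i j
    obtain ⟨e⟩ := nonempty_flagQuot_equiv_flagQuot_swap F G (i + 1) (j + 1)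
    exact eq_of_equiv_quotient_span_pow hk0 hk1 (hsub_le ..) (hsub_le ..)
      (e₁.symm ≪≫ₗ e ≪≫ₗ e₂)
  refine ⟨fun i j => colonExp π k F G (f j) j i - colonExp π k F G (f j) j (i + 1),
    fun i j => ⟨hsub_le .., hequivF i j⟩, fun j => ?_, fun i => ?_⟩
  · refine (Fin.sum_univ_eq_sum_range
      (fun i => colonExp π k F G (f j) j i - colonExp π k F G (f j) j (i + 1)) n).trans ?_
    exact sum_colonExp_sub_colonExp hk0 hk1 hmax (hF.succ j) (hF.colon_eq_bot j) hG.bot hG.top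
      hG.mono
  · simp only [hexp_swap i]
    refine (Fin.sum_univ_eq_sum_range
      (fun j => colonExp π k G F (g i) i j - colonExp π k G F (g i) i (j + 1)) n).trans ?_
    exact sum_colonExp_sub_colonExp hk0 hk1 hmax (hG.succ i) (hG.colon_eq_bot i) hF.bot hF.top
      hF.mono

end Flags

theorem mem_stdFlag {A : Type*} [CommRing A] {n i : ℕ} {v : Fin n → A} :
    v ∈ stdFlag A n i ↔ ∀ m : Fin n, i ≤ (m : ℕ) → v m = 0 :=
  Iff.rfl

theorem isFlagOfBasis_stdFlag (A : Type*) [CommRing A] (n : ℕ) :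
    IsFlagOfBasis (stdFlag A n) (fun j : Fin n => Pi.single j 1) where
  bot := by
    ext v
    simp [mem_stdFlag, funext_iff]
  top := by
    ext v
    simp only [mem_stdFlag, Submodule.mem_top, iff_true]
    exact fun m hm => absurd m.isLt hm.not_gt
  mono _ _ h _ hv m hm := hv m (h.trans hm)
  succ j := by
    apply le_antisymm
    · intro v hv
      refine mem_sup.mpr ⟨v - v j • Pi.single j 1, fun m hm => ?_, v j • Pi.single j 1,
        smul_mem _ _ (mem_span_singleton_self _), sub_add_cancel _ _⟩
      rcases eq_or_ne m j with rfl | hmj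
      · simp
      · have hjm : (j : ℕ) + 1 ≤ m := lt_of_le_of_ne hm (fun h => hmj (Fin.ext h.symm))
        simp [hv m hjm, hmj]
    · refine sup_le (fun v hv m hm => hv m (Nat.le_of_succ_le hm)) ?_
      rw [Submodule.span_le, Set.singleton_subset_iff]
      intro m hm
      exact Pi.single_eq_of_ne (fun h => by omega : m ≠ j) _
  colon_eq_bot j := by
    ext c
    simp only [mem_colon_singleton, mem_stdFlag, Submodule.mem_bot]
    exact ⟨fun h => by simpa using h j le_rfl, fun h m _ => by simp [h]⟩

theorem stmt3 {A : Type*} [CommRing A] [IsLocalRing A] [IsPrincipalIdealRing A]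
    (π : A) (k : ℕ) (hmax : IsLocalRing.maximalIdeal A = Ideal.span {π})
    (hk0 : π ^ k = 0) (hk1 : π ^ (k - 1) ≠ 0)
    {n : ℕ} (α : Matrix (Fin n) (Fin n) A) (hα : IsUnit α) :
    ∃ r : Fin n → Fin n → ℕ,
      (∀ i j : Fin n, r i j ≤ k ∧
        Nonempty (interQuot A α ((i : ℕ) + 1) ((j : ℕ) + 1) ≃ₗ[A]
          A ⧸ Ideal.span {π ^ r i j}) ∧
        (∀ r' : ℕ, r' ≤ k →
          Nonempty (interQuot A α ((i : ℕ) + 1) ((j : ℕ) + 1) ≃ₗ[A]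
            A ⧸ Ideal.span {π ^ r'}) → r' = r i j)) ∧
      (∀ j : Fin n, ∑ i : Fin n, r i j = k) ∧
      (∀ i : Fin n, ∑ j : Fin n, r i j = k) := by
  have hαbij : Function.Bijective α.mulVecLin :=
    (Module.End.isUnit_iff _).mp (hα.map Matrix.toLinAlgEquiv')
  obtain ⟨r, hr, hsum_i, hsum_j⟩ :=
    ((isFlagOfBasis_stdFlag A n).map hαbij).exists_flagQuot_equiv hk0 hk1 hmax
      (isFlagOfBasis_stdFlag A n)
  refine ⟨r, fun i j => ⟨(hr i j).1, (hr i j).2, fun r' hr' ⟨e'⟩ => ?_⟩, hsum_i, hsum_j⟩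
  obtain ⟨e⟩ := (hr i j).2
  exact eq_of_equiv_quotient_span_pow hk0 hk1 hr' (hr i j).1 (e'.symm ≪≫ₗ e)
end

section
/- Let A be a commutative local principal ideal ring of finite length k with maximal ideal (π), and let B ⊆ GL_2(A) be the group of invertible upper triangular matrices. Then the matrices [[1,0],[π^r,1]] for 0 ≤ r ≤ k form a complete set of representatives for the double coset space B\GL_2(A)/B; in particular the number of double cosets is exactly k+1. -/
open Matrix

/-!
The ideal generated by the lower-left entry is a double coset invariant: multiplying by upper
triangular matrices on both sides only scales it by units of their diagonals. In `A` every
element is associated to `π ^ r` for a unique `r ≤ k`, which gives uniqueness. Conversely, over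
a local ring the first column of an invertible matrix contains a unit, so a row operation makes
the `(0, 0)` entry a unit; then row and column operations reduce the matrix to
`!![1, 0; c, 1]`, and diagonal rescaling replaces `c` by any associate, in particular by `π ^ r`.
-/

lemma le_of_pow_dvd_pow_of_pow_eq_zero {M : Type*} [CommMonoidWithZero M] {π : M} {k r s : ℕ}
    (hk0 : π ^ k = 0) (hk1 : π ^ (k - 1) ≠ 0) (hs : s ≤ k) (h : π ^ s ∣ π ^ r) :
    s ≤ r := by
  by_contra! hrs
  have : π ^ k ∣ π ^ (k - 1) :=
    calc π ^ k ∣ π ^ (s + (k - 1 - r)) := pow_dvd_pow π (by omega)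
      _ ∣ π ^ r * π ^ (k - 1 - r) := by rw [pow_add]; exact mul_dvd_mul_right h _
      _ = π ^ (k - 1) := by rw [← pow_add]; congr 1; omega
  exact hk1 (zero_dvd_iff.mp (hk0 ▸ this))

lemma eq_of_associated_pow_of_pow_eq_zero {M : Type*} [CommMonoidWithZero M] {π : M} {k r s : ℕ}
    (hk0 : π ^ k = 0) (hk1 : π ^ (k - 1) ≠ 0) (hr : r ≤ k) (hs : s ≤ k)
    (h : Associated (π ^ r) (π ^ s)) : r = s :=
  le_antisymm (le_of_pow_dvd_pow_of_pow_eq_zero hk0 hk1 hr h.dvd)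
    (le_of_pow_dvd_pow_of_pow_eq_zero hk0 hk1 hs h.symm.dvd)

section CommRing

variable {A : Type*} [CommRing A]

lemma isUT_of_fin_two {x z : A} (y : A) (hx : IsUnit x) (hz : IsUnit z) :
    IsUT !![x, y; 0, z] := by
  refine ⟨fun i j hij => ?_, ?_⟩
  · fin_cases i <;> fin_cases j <;> simp_all
  · simpa [Matrix.isUnit_iff_isUnit_det] using hx.mul hz

lemma IsUT.isUnit_apply_self {n : ℕ} {M : Matrix (Fin n) (Fin n) A} (h : IsUT M) (i : Fin n) :
    IsUnit (M i i) := by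
  have hdet := (Matrix.isUnit_iff_isUnit_det M).mp h.2
  rw [Matrix.det_of_isUpperTriangular h.1, IsUnit.prod_univ_iff] at hdet
  exact hdet i

lemma IsUT.mul {n : ℕ} {M N : Matrix (Fin n) (Fin n) A} (hM : IsUT M) (hN : IsUT N) :
    IsUT (M * N) :=
  ⟨hM.1.mul hN.1, hM.2.mul hN.2⟩

lemma SameDC.trans {n : ℕ} {α β γ : Matrix (Fin n) (Fin n) A} (h₁ : SameDC α β)
    (h₂ : SameDC β γ) : SameDC α γ := by
  obtain ⟨b, c, hb, hc, rfl⟩ := h₁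
  obtain ⟨b', c', hb', hc', rfl⟩ := h₂
  exact ⟨b' * b, c * c', hb'.mul hb, hc.mul hc', by simp only [Matrix.mul_assoc]⟩

lemma SameDC.associated_apply_one_zero {α β : Matrix (Fin 2) (Fin 2) A} (h : SameDC α β) :
    Associated (α 1 0) (β 1 0) := by
  obtain ⟨b, c, hb, hc, rfl⟩ := h
  have hb10 : b 1 0 = 0 := hb.1 (by decide : (0 : Fin 2) < 1)
  have hc10 : c 1 0 = 0 := hc.1 (by decide : (0 : Fin 2) < 1)
  refine ⟨(hb.isUnit_apply_self 1).unit * (hc.isUnit_apply_self 0).unit, ?_⟩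
  simp only [Units.val_mul, IsUnit.unit_spec, Matrix.mul_apply, Fin.sum_univ_two, hb10, hc10]
  ring

lemma sameDC_lowerUnitriangular_of_isUnit_apply_zero_zero {a b c d : A} (ha : IsUnit a)
    (hdet : IsUnit (a * d - b * c)) : SameDC !![a, b; c, d] !![1, 0; c, 1] := by
  obtain ⟨a', ha'⟩ := ha.exists_left_inv
  have he : IsUnit (d - c * a' * b) :=
    isUnit_of_mul_isUnit_right (x := a) <| by
      convert hdet using 1; linear_combination -(c * b) * ha'
  obtain ⟨e', he'⟩ := he.exists_left_inv
  refine ⟨!![a', 0; 0, 1], !![1, -(a' * b * e'); 0, e'],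
    isUT_of_fin_two _ (IsUnit.of_mul_eq_one a ha') isUnit_one,
    isUT_of_fin_two _ isUnit_one (IsUnit.of_mul_eq_one _ he'), ?_⟩
  simp only [mul_fin_two, EmbeddingLike.apply_eq_iff_eq, vecCons_inj, and_true]
  refine ⟨⟨?_, ?_⟩, ?_, ?_⟩
  · linear_combination ha'
  · linear_combination -(a' * b * e') * ha'
  · ring
  · linear_combination he'

lemma sameDC_lowerUnitriangular_of_associated {c c' : A} (h : Associated c c') :
    SameDC !![1, 0; c, 1] !![1, 0; c', 1] := by
  obtain ⟨u, rfl⟩ := h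
  refine ⟨!![1, 0; 0, (u : A)], !![1, 0; 0, ((u⁻¹ : Aˣ) : A)],
    isUT_of_fin_two _ isUnit_one u.isUnit, isUT_of_fin_two _ isUnit_one u⁻¹.isUnit, ?_⟩
  simp [mul_comm]

end CommRing

section IsLocalRing

variable {A : Type*} [CommRing A] [IsLocalRing A]

lemma exists_isUnit_add_mul_of_isUnit_det {a b c d : A} (hdet : IsUnit (a * d - b * c)) :
    ∃ y, IsUnit (a + y * c) := by
  rw [sub_eq_add_neg] at hdet
  rcases IsLocalRing.isUnit_or_isUnit_of_isUnit_add hdet with had | hbc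
  · exact ⟨0, by simpa using isUnit_of_mul_isUnit_left had⟩
  · rw [IsUnit.neg_iff] at hbc
    obtain ⟨c', hc'⟩ := (isUnit_of_mul_isUnit_right hbc).exists_left_inv
    exact ⟨(1 - a) * c', by convert isUnit_one; linear_combination (1 - a) * hc'⟩

lemma sameDC_lowerUnitriangular_of_isUnit {α : Matrix (Fin 2) (Fin 2) A} (hα : IsUnit α) :
    SameDC α !![1, 0; α 1 0, 1] := by
  have hdet : IsUnit (α 0 0 * α 1 1 - α 0 1 * α 1 0) := by
    simpa [Matrix.isUnit_iff_isUnit_det, det_fin_two] using hα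
  obtain ⟨y, hy⟩ := exists_isUnit_add_mul_of_isUnit_det hdet
  have hrow : SameDC α !![α 0 0 + y * α 1 0, α 0 1 + y * α 1 1; α 1 0, α 1 1] :=
    ⟨!![1, y; 0, 1], 1, isUT_of_fin_two y isUnit_one isUnit_one,
      ⟨blockTriangular_one, isUnit_one⟩, by rw [eta_fin_two α]; simp⟩
  exact hrow.trans <| sameDC_lowerUnitriangular_of_isUnit_apply_zero_zero hy <| by
    convert hdet using 1; ring

lemma exists_associated_pow {π : A} {k : ℕ}
    (hmax : IsLocalRing.maximalIdeal A = Ideal.span {π}) (hk0 : π ^ k = 0) (c : A) :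
    ∃ r ≤ k, Associated c (π ^ r) := by
  suffices key : ∀ m, π ^ (k - m) ∣ c → ∃ r ≤ k, Associated c (π ^ r) from
    key k (by simp)
  intro m
  induction m with
  | zero =>
    intro h
    rw [Nat.sub_zero, hk0, zero_dvd_iff] at h
    exact ⟨k, le_rfl, by rw [h, hk0]⟩
  | succ m ih =>
    rintro ⟨t, rfl⟩
    by_cases ht : IsUnit t
    · exact ⟨k - (m + 1), Nat.sub_le _ _, (associated_mul_unit_right _ _ ht).symm⟩
    · have hπt : π ∣ t := by
        rw [← Ideal.mem_span_singleton, ← hmax]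
        exact (IsLocalRing.mem_maximalIdeal t).mpr ht
      apply ih
      calc π ^ (k - m) ∣ π ^ (k - (m + 1) + 1) := pow_dvd_pow π (by omega)
        _ ∣ π ^ (k - (m + 1)) * t := by rw [pow_succ]; exact mul_dvd_mul_left _ hπt

end IsLocalRing

theorem stmt5_general {A : Type*} [CommRing A] [IsLocalRing A]
    (π : A) (k : ℕ) (hmax : IsLocalRing.maximalIdeal A = Ideal.span {π})
    (hk0 : π ^ k = 0) (hk1 : π ^ (k - 1) ≠ 0)
    (α : Matrix (Fin 2) (Fin 2) A) (hα : IsUnit α) :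
    ∃! r : Fin (k + 1), SameDC α !![1, 0; π ^ (r : ℕ), 1] := by
  obtain ⟨r, hrk, hr⟩ := exists_associated_pow hmax hk0 (α 1 0)
  have hαr : SameDC α !![1, 0; π ^ r, 1] :=
    (sameDC_lowerUnitriangular_of_isUnit hα).trans (sameDC_lowerUnitriangular_of_associated hr)
  refine ⟨⟨r, Nat.lt_succ_of_le hrk⟩, hαr, fun s hs => Fin.ext ?_⟩
  have hs' : Associated (α 1 0) (π ^ (s : ℕ)) := by simpa using hs.associated_apply_one_zero
  exact eq_of_associated_pow_of_pow_eq_zero hk0 hk1 (Nat.lt_succ_iff.mp s.isLt) hrk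
    (hs'.symm.trans hr)

theorem stmt5 {A : Type*} [CommRing A] [IsLocalRing A] [IsPrincipalIdealRing A]
    (π : A) (k : ℕ) (hmax : IsLocalRing.maximalIdeal A = Ideal.span {π})
    (hk0 : π ^ k = 0) (hk1 : π ^ (k - 1) ≠ 0)
    (α : Matrix (Fin 2) (Fin 2) A) (hα : IsUnit α) :
    ∃! r : Fin (k + 1), SameDC α !![1, 0; π ^ (r : ℕ), 1] :=
  stmt5_general π k hmax hk0 hk1 α hα
end

section
/- Let A be a commutative local principal ideal ring with maximal ideal (π), and let M and M' be two free rank-1 direct summands of A² (i.e., submodules generated by vectors with at least one unit coordinate). Then M ∩ M' is isomorphic as an A-module to A/(π^r) for some 0 ≤ r ≤ k, where k is the length of A (with A/(π^k) = A). -/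
/-!
Every ideal `I` of `A` is `(π ^ r)` with `r ≤ k`: if `r` is least with `π ^ r ∈ I`, then for
`a = c * π ^ n ∈ I` with `n < r` the coefficient `c` cannot be a unit, so `c ∈ (π)` and
`a ∈ (π ^ (n + 1))`. Since ideals are principal, `Av ∩ Aw`, a submodule of the cyclic module
`Av`, is itself cyclic, say `Ax`, and then `Ax ≅ A ⧸ ann x = A ⧸ (π ^ r)`.
-/

namespace Submodule

variable {R M : Type*} [Ring R] [IsPrincipalIdealRing R] [AddCommGroup M] [Module R M]

theorem exists_eq_span_singleton_of_le_span_singleton {v : M} {N : Submodule R M}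
    (hN : N ≤ R ∙ v) : ∃ x, N = R ∙ x := by
  set φ := LinearMap.toSpanSingleton R M v
  obtain ⟨g, hg⟩ := (IsPrincipalIdealRing.principal (N.comap φ)).principal
  refine ⟨φ g, ?_⟩
  have hN_eq : N = (N.comap φ).map φ := by
    rw [map_comap_eq, ← LinearMap.span_singleton_eq_range, inf_eq_right.2 hN]
  rw [hN_eq, hg, Submodule.map_span, Set.image_singleton]

end Submodule

namespace IsLocalRing

variable {A : Type*} [CommRing A] [IsLocalRing A] {π : A}

theorem mem_span_pow_of_forall_pow_notMem (hmax : maximalIdeal A = Ideal.span {π})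
    {I : Ideal A} {a : A} (ha : a ∈ I) {r : ℕ} (hr : ∀ m < r, π ^ m ∉ I) :
    a ∈ Ideal.span {π ^ r} := by
  induction r with
  | zero => simp
  | succ n ih =>
    obtain ⟨c, rfl⟩ := Ideal.mem_span_singleton'.1 (ih fun m hm => hr m (by omega))
    have hc : c ∈ maximalIdeal A := fun hcu => hr n (by omega) <| by
      simpa [← mul_assoc] using I.mul_mem_left (↑hcu.unit⁻¹ : A) ha
    rw [hmax, Ideal.mem_span_singleton'] at hc
    obtain ⟨d, rfl⟩ := hc
    exact Ideal.mem_span_singleton'.2 ⟨d, by ring⟩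

theorem exists_le_ideal_eq_span_pow (hmax : maximalIdeal A = Ideal.span {π}) {k : ℕ}
    (hk : π ^ k = 0) (I : Ideal A) : ∃ r ≤ k, I = Ideal.span {π ^ r} := by
  classical
  have hkI : π ^ k ∈ I := hk ▸ I.zero_mem
  have hex : ∃ n, π ^ n ∈ I := ⟨k, hkI⟩
  refine ⟨Nat.find hex, Nat.find_min' hex hkI, le_antisymm ?_ ?_⟩
  · exact fun a ha => mem_span_pow_of_forall_pow_notMem hmax ha fun m => Nat.find_min hex
  · exact (Ideal.span_singleton_le_iff_mem I).2 (Nat.find_spec hex)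

end IsLocalRing

theorem stmt6_general {A : Type*} [CommRing A] [IsLocalRing A] [IsPrincipalIdealRing A]
    (π : A) (k : ℕ) (hmax : IsLocalRing.maximalIdeal A = Ideal.span {π})
    (hk0 : π ^ k = 0)
    (v w : Fin 2 → A) :
    ∃ r : ℕ, r ≤ k ∧
      Nonempty ((↥(Submodule.span A {v} ⊓ Submodule.span A {w})) ≃ₗ[A]
        A ⧸ Ideal.span {π ^ r}) := by
  obtain ⟨x, hx⟩ := Submodule.exists_eq_span_singleton_of_le_span_singleton
    (inf_le_left : Submodule.span A {v} ⊓ Submodule.span A {w} ≤ _)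
  obtain ⟨r, hrk, hr⟩ := IsLocalRing.exists_le_ideal_eq_span_pow hmax hk0
    (Ideal.torsionOf A (Fin 2 → A) x)
  exact ⟨r, hrk, ⟨(LinearEquiv.ofEq _ _ hx).trans <|
    (Ideal.quotTorsionOfEquivSpanSingleton A _ x).symm.trans <|
    Submodule.quotEquivOfEq _ _ hr⟩⟩

theorem stmt6 {A : Type*} [CommRing A] [IsLocalRing A] [IsPrincipalIdealRing A]
    (π : A) (k : ℕ) (hmax : IsLocalRing.maximalIdeal A = Ideal.span {π})
    (hk0 : π ^ k = 0) (hk1 : π ^ (k - 1) ≠ 0)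
    (v w : Fin 2 → A) (hv : IsUnit (v 0) ∨ IsUnit (v 1)) (hw : IsUnit (w 0) ∨ IsUnit (w 1)) :
    ∃ r : ℕ, r ≤ k ∧
      Nonempty ((↥(Submodule.span A {v} ⊓ Submodule.span A {w})) ≃ₗ[A]
        A ⧸ Ideal.span {π ^ r}) :=
  stmt6_general π k hmax hk0 v w
end

section
/- Let A be a commutative local principal ideal ring of finite length k with maximal ideal (π), let i, j, l be integers with k > j > max{i,l} ≥ min{i,l} > 0 and j ≠ i + l, and let a, a' ∈ A be units. Set ε = min{j−i, j−l, i, l} and α(a) = [[π^i, 1],[π^j a, π^l]]. Then there exist invertible upper triangular 2×2 matrices X, Y over A with X·α(a) = α(a')·Y if and only if a ≡ a' mod π^{min{ε, k−j}}. -/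
open Matrix

/-!
Write `X = [[x₁, x₂], [0, x₄]]`, `Y = [[y₁, y₂], [0, y₄]]` and `e = min(j-i, j-l, i, l)`.
Eliminating `x₁, x₄, y₁` from the four entries of `X α(a) = α(a') Y` leaves
`π^j (a - a') y₄ = π^j a' (x₂ (π^(j-i) a - π^l) + y₂ (π^i - π^(j-l) a))`,
so `π^(j+e) ∣ π^j (a - a')`. Conversely, with `y₁ = 1` the entries determine `x₁, x₄, y₄`
from free `x₂, y₂`, and the only remaining condition is `π^j a x₄ = π^j a'`, where
`x₄ = 1 + x₂ (π^l - π^(j-i) a) - y₂ (π^i - π^(j-l) a')`. As `j ≠ i + l`, these two brackets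
are `π^min(l, j-i)` and `π^min(i, j-l)` times units, and `e` is one of the two minima,
so `x₂` or `y₂` can absorb any `a - a' ∈ π^e A + Ann(π^j)`. Finally `Ann(π^j) = π^(k-j) A`
turns `π^(j+e) ∣ π^j (a - a')` into `π^min(e, k-j) ∣ a - a'`.
-/

open IsLocalRing

section UpperTriangular

variable {A : Type*} [CommRing A]

theorem isUT_fin_two_iff {M : Matrix (Fin 2) (Fin 2) A} :
    IsUT M ↔ M 1 0 = 0 ∧ IsUnit (M 0 0) ∧ IsUnit (M 1 1) := by
  have hBT : M.BlockTriangular id ↔ M 1 0 = 0 := by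
    refine ⟨fun h => h (by decide), fun h p q hpq => ?_⟩
    fin_cases p <;> fin_cases q <;> simp_all
  rw [IsUT, hBT, isUnit_iff_isUnit_det, det_fin_two]
  constructor
  · rintro ⟨h10, hdet⟩
    rw [h10, mul_zero, sub_zero, IsUnit.mul_iff] at hdet
    exact ⟨h10, hdet⟩
  · rintro ⟨h10, h00, h11⟩
    refine ⟨h10, ?_⟩
    rw [h10, mul_zero, sub_zero]
    exact h00.mul h11

theorem upper_mul_eq_mul_upper_iff {π a a' x₁ x₂ x₄ y₁ y₂ y₄ : A} {i j l : ℕ} :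
    !![x₁, x₂; 0, x₄] * !![π ^ i, 1; π ^ j * a, π ^ l] =
        !![π ^ i, 1; π ^ j * a', π ^ l] * !![y₁, y₂; 0, y₄] ↔
      x₁ * π ^ i + x₂ * (π ^ j * a) = π ^ i * y₁ ∧ x₁ + x₂ * π ^ l = π ^ i * y₂ + y₄ ∧
        x₄ * (π ^ j * a) = π ^ j * a' * y₁ ∧ x₄ * π ^ l = π ^ j * a' * y₂ + π ^ l * y₄ := by
  simp [and_assoc]

end UpperTriangular

section LocalRing

variable {A : Type*} [CommRing A] [IsLocalRing A] {π : A}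

theorem isUnit_add_of_mem_maximalIdeal {w z : A} (hw : IsUnit w) (hz : z ∈ maximalIdeal A) :
    IsUnit (w + z) := by
  by_contra h
  have hw' : w ∈ maximalIdeal A := by
    simpa using (maximalIdeal A).sub_mem ((mem_maximalIdeal _).mpr h) hz
  exact hw' hw

theorem exists_isUnit_pow_sub_pow_mul (hπ : π ∈ maximalIdeal A) {m n : ℕ} (hmn : m ≠ n) {a : A}
    (ha : IsUnit a) : ∃ u, IsUnit u ∧ π ^ m - π ^ n * a = π ^ min m n * u := by
  rcases lt_or_gt_of_ne hmn with hlt | hgt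
  · refine ⟨1 + -(π ^ (n - m) * a), isUnit_add_of_mem_maximalIdeal isUnit_one
      (neg_mem (Ideal.mul_mem_right _ _ (Ideal.pow_mem_of_mem _ hπ _ (by omega)))), ?_⟩
    rw [min_eq_left hlt.le, mul_add, mul_neg, ← mul_assoc, ← pow_add, Nat.add_sub_cancel' hlt.le]
    ring
  · refine ⟨-a + π ^ (m - n), isUnit_add_of_mem_maximalIdeal ha.neg
      (Ideal.pow_mem_of_mem _ hπ _ (by omega)), ?_⟩
    rw [min_eq_right hgt.le, mul_add, ← pow_add, Nat.add_sub_cancel' hgt.le]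
    ring

theorem dvd_of_mul_eq_zero_of_ne_zero (hmax : maximalIdeal A = Ideal.span {π}) {b x : A}
    (hb : b ≠ 0) (hx : b * x = 0) : π ∣ x := by
  have hx' : x ∈ maximalIdeal A := fun hu => hb (hu.mul_left_eq_zero.mp hx)
  rwa [hmax, Ideal.mem_span_singleton] at hx'

theorem pow_succ_dvd_of_pow_mul_eq_zero (hmax : maximalIdeal A = Ideal.span {π}) {m d : ℕ}
    (hne : π ^ (m + d) ≠ 0) {x : A} (hx : π ^ m * x = 0) : π ^ (d + 1) ∣ x := by
  induction d generalizing m x with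
  | zero => simpa using dvd_of_mul_eq_zero_of_ne_zero hmax hne hx
  | succ d ih =>
    obtain ⟨y, rfl⟩ := ih (m := m + 1) (by rwa [add_right_comm])
      (by rw [pow_succ, mul_right_comm, hx, zero_mul])
    obtain ⟨z, rfl⟩ := dvd_of_mul_eq_zero_of_ne_zero hmax hne
      (x := y) (by rwa [← mul_assoc, ← pow_add] at hx)
    exact ⟨z, by ring⟩

theorem pow_add_dvd_pow_mul_iff (hmax : maximalIdeal A = Ideal.span {π}) {k j e : ℕ}
    (hk0 : π ^ k = 0) (hk1 : π ^ (k - 1) ≠ 0) (hjk : j < k) {d : A} :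
    π ^ (j + e) ∣ π ^ j * d ↔ π ^ min e (k - j) ∣ d := by
  constructor
  · rintro ⟨c, hc⟩
    have hann : π ^ j * (d - π ^ e * c) = 0 := by rw [mul_sub, hc]; ring
    obtain ⟨r, hr⟩ := pow_succ_dvd_of_pow_mul_eq_zero hmax
      (by rwa [Nat.add_sub_cancel' (Nat.le_sub_one_of_lt hjk)]) hann
    rw [show k - 1 - j + 1 = k - j by omega] at hr
    rw [← sub_add_cancel d (π ^ e * c), hr]
    exact dvd_add ((pow_dvd_pow π (min_le_right _ _)).mul_right _)
      ((pow_dvd_pow π (min_le_left _ _)).mul_right _)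
  · rintro ⟨c, rfl⟩
    rcases le_total e (k - j) with he | he
    · rw [min_eq_left he]
      exact ⟨c, by ring⟩
    · rw [min_eq_right he, ← mul_assoc, ← pow_add, Nat.add_sub_cancel' hjk.le, hk0, zero_mul]
      exact dvd_zero _

end LocalRing

section Conjugacy

variable {A : Type*} [CommRing A] {π a a' : A} {i j l : ℕ}

theorem pow_add_dvd_of_isUT_mul_eq (hij : i ≤ j) (hlj : l ≤ j)
    {X Y : Matrix (Fin 2) (Fin 2) A} (hX : IsUT X) (hY : IsUT Y)
    (h : X * !![π ^ i, 1; π ^ j * a, π ^ l] = !![π ^ i, 1; π ^ j * a', π ^ l] * Y) :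
    π ^ (j + min (min (j - i) (j - l)) (min i l)) ∣ π ^ j * (a - a') := by
  obtain ⟨hX10, -, -⟩ := isUT_fin_two_iff.mp hX
  obtain ⟨hY10, -, hY11⟩ := isUT_fin_two_iff.mp hY
  rw [eta_fin_two X, eta_fin_two Y, hX10, hY10, upper_mul_eq_mul_upper_iff] at h
  obtain ⟨h00, h01, h10, h11⟩ := h
  set e := min (min (j - i) (j - l)) (min i l)
  have key : π ^ j * (a - a') * Y 1 1 =
      π ^ j * a' * (X 0 1 * (π ^ (j - i) * a - π ^ l) + Y 0 1 * (π ^ i - π ^ (j - l) * a)) := by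
    linear_combination h10 - a * π ^ (j - l) * h11 - a' * π ^ (j - i) * h00
        + a' * π ^ j * h01 + (a * (X 1 1 - Y 1 1)) * pow_sub_mul_pow π hlj
        + (a' * (X 0 0 - Y 0 0)) * pow_sub_mul_pow π hij
  have hP : π ^ e ∣ π ^ (j - i) * a - π ^ l :=
    dvd_sub ((pow_dvd_pow π (by omega)).mul_right a) (pow_dvd_pow π (by omega))
  have hQ : π ^ e ∣ π ^ i - π ^ (j - l) * a :=
    dvd_sub (pow_dvd_pow π (by omega)) ((pow_dvd_pow π (by omega)).mul_right a)
  obtain ⟨c, hc⟩ := dvd_add (hP.mul_left (X 0 1)) (hQ.mul_left (Y 0 1))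
  obtain ⟨u, hu⟩ := hY11.exists_right_inv
  refine ⟨a' * c * u, ?_⟩
  linear_combination u * key + (π ^ j * a' * u) * hc - π ^ j * (a - a') * hu
    - (a' * c * u) * pow_add π j e

theorem exists_isUT_mul_eq_mul [IsLocalRing A] (hπ : π ∈ maximalIdeal A) (hi : 0 < i) (hl : 0 < l)
    (hij : i < j) (hlj : l < j) (x₂ y₂ : A)
    (h : π ^ j * (a * (1 + (x₂ * (π ^ l - π ^ (j - i) * a) - y₂ * (π ^ i - π ^ (j - l) * a')))) =
      π ^ j * a') :
    ∃ X Y : Matrix (Fin 2) (Fin 2) A, IsUT X ∧ IsUT Y ∧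
      X * !![π ^ i, 1; π ^ j * a, π ^ l] = !![π ^ i, 1; π ^ j * a', π ^ l] * Y := by
  have hpow : ∀ {n}, 0 < n → π ^ n ∈ maximalIdeal A := fun hn => Ideal.pow_mem_of_mem _ hπ _ hn
  have hP : π ^ l - π ^ (j - i) * a ∈ maximalIdeal A :=
    sub_mem (hpow hl) (Ideal.mul_mem_right _ _ (hpow (by omega)))
  have hQ : π ^ i - π ^ (j - l) * a' ∈ maximalIdeal A :=
    sub_mem (hpow hi) (Ideal.mul_mem_right _ _ (hpow (by omega)))
  have hR : x₂ * (π ^ l - π ^ (j - i) * a) - y₂ * (π ^ i - π ^ (j - l) * a') ∈ maximalIdeal A :=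
    sub_mem (Ideal.mul_mem_left _ _ hP) (Ideal.mul_mem_left _ _ hQ)
  set x₄ := 1 + (x₂ * (π ^ l - π ^ (j - i) * a) - y₂ * (π ^ i - π ^ (j - l) * a'))
  refine ⟨!![1 + -(x₂ * π ^ (j - i) * a), x₂; 0, x₄], !![1, y₂; 0, x₄ + -(π ^ (j - l) * a' * y₂)],
    isUT_fin_two_iff.mpr ⟨rfl, ?_, ?_⟩, isUT_fin_two_iff.mpr ⟨rfl, isUnit_one, ?_⟩,
    upper_mul_eq_mul_upper_iff.mpr ⟨?_, ?_, ?_, ?_⟩⟩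
  · exact isUnit_add_of_mem_maximalIdeal isUnit_one
      (neg_mem (Ideal.mul_mem_right _ _ (Ideal.mul_mem_left _ _ (hpow (by omega)))))
  · exact isUnit_add_of_mem_maximalIdeal isUnit_one hR
  · exact isUnit_add_of_mem_maximalIdeal (isUnit_add_of_mem_maximalIdeal isUnit_one hR)
      (neg_mem (Ideal.mul_mem_right _ _ (Ideal.mul_mem_right _ _ (hpow (by omega)))))
  · linear_combination (-(x₂ * a)) * pow_sub_mul_pow π hij.le
  · ring
  · linear_combination h
  · linear_combination (a' * y₂) * pow_sub_mul_pow π hlj.le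

theorem exists_isUT_mul_eq_mul_iff [IsLocalRing A] (hπ : π ∈ maximalIdeal A) (hi : 0 < i)
    (hl : 0 < l) (hij : i < j) (hlj : l < j) (hne : j ≠ i + l) (ha : IsUnit a) (ha' : IsUnit a') :
    (∃ X Y : Matrix (Fin 2) (Fin 2) A, IsUT X ∧ IsUT Y ∧
        X * !![π ^ i, 1; π ^ j * a, π ^ l] = !![π ^ i, 1; π ^ j * a', π ^ l] * Y) ↔
      π ^ (j + min (min (j - i) (j - l)) (min i l)) ∣ π ^ j * (a - a') := by
  refine ⟨fun ⟨X, Y, hX, hY, h⟩ => pow_add_dvd_of_isUT_mul_eq hij.le hlj.le hX hY h, ?_⟩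
  rintro ⟨c, hc⟩
  obtain ⟨a₁, ha₁⟩ := ha.exists_right_inv
  rw [show min (min (j - i) (j - l)) (min i l) = min (min l (j - i)) (min i (j - l)) by omega] at hc
  rcases min_choice (min l (j - i)) (min i (j - l)) with he | he <;> rw [he] at hc
  · obtain ⟨u, hu, hP⟩ := exists_isUnit_pow_sub_pow_mul hπ (m := l) (n := j - i) (by omega) ha
    obtain ⟨u₁, hu₁⟩ := hu.exists_right_inv
    refine exists_isUT_mul_eq_mul hπ hi hl hij hlj (-(c * a₁ * u₁)) 0 ?_
    rw [hP]
    linear_combination hc - π ^ j * π ^ min l (j - i) * c * (u * u₁ * ha₁ + hu₁)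
  · obtain ⟨v, hv, hQ⟩ := exists_isUnit_pow_sub_pow_mul hπ (m := i) (n := j - l) (by omega) ha'
    obtain ⟨v₁, hv₁⟩ := hv.exists_right_inv
    refine exists_isUT_mul_eq_mul hπ hi hl hij hlj 0 (c * a₁ * v₁) ?_
    rw [hQ]
    linear_combination hc - π ^ j * π ^ min i (j - l) * c * (v * v₁ * ha₁ + hv₁)

end Conjugacy

theorem stmt7_general {A : Type*} [CommRing A] [IsLocalRing A]
    (π : A) (k i j l : ℕ) (hmax : IsLocalRing.maximalIdeal A = Ideal.span {π})
    (hk0 : π ^ k = 0) (hk1 : π ^ (k - 1) ≠ 0)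
    (hjk : j < k) (hij : i < j) (hlj : l < j) (hi : 0 < i) (hl : 0 < l)
    (hne : j ≠ i + l) (a a' : A) (ha : IsUnit a) (ha' : IsUnit a') :
    (∃ X Y : Matrix (Fin 2) (Fin 2) A, IsUT X ∧ IsUT Y ∧
        X * !![π ^ i, 1; π ^ j * a, π ^ l] = !![π ^ i, 1; π ^ j * a', π ^ l] * Y) ↔
      π ^ min (min (min (j - i) (j - l)) (min i l)) (k - j) ∣ (a - a') := by
  have hπ : π ∈ maximalIdeal A := hmax ▸ Ideal.mem_span_singleton_self π
  rw [exists_isUT_mul_eq_mul_iff hπ hi hl hij hlj hne ha ha',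
    pow_add_dvd_pow_mul_iff hmax hk0 hk1 hjk]

theorem stmt7 {A : Type*} [CommRing A] [IsLocalRing A] [IsPrincipalIdealRing A]
    (π : A) (k i j l : ℕ) (hmax : IsLocalRing.maximalIdeal A = Ideal.span {π})
    (hk0 : π ^ k = 0) (hk1 : π ^ (k - 1) ≠ 0)
    (hjk : j < k) (hij : i < j) (hlj : l < j) (hi : 0 < i) (hl : 0 < l)
    (hne : j ≠ i + l) (a a' : A) (ha : IsUnit a) (ha' : IsUnit a') :
    (∃ X Y : Matrix (Fin 2) (Fin 2) A, IsUT X ∧ IsUT Y ∧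
        X * !![π ^ i, 1; π ^ j * a, π ^ l] = !![π ^ i, 1; π ^ j * a', π ^ l] * Y) ↔
      π ^ min (min (min (j - i) (j - l)) (min i l)) (k - j) ∣ (a - a') :=
  stmt7_general π k i j l hmax hk0 hk1 hjk hij hlj hi hl hne a a' ha ha'
end

section
/- Let A be a commutative local principal ideal ring of finite length k with maximal ideal (π), let i, j, l be integers with k > j > max{i,l} ≥ min{i,l} > 0 and j = i + l, and let a, a' ∈ A be units. Set ε = min{j−i, j−l, i, l} = min{i, l}, and for a unit u let δ(u) = v(u − 1) be the π-adic valuation of u − 1 (with δ(u) = k if u = 1). Then there exist invertible upper triangular 2×2 matrices X, Y over A with X·[[π^i,1],[π^j a, π^l]] = [[π^i,1],[π^j a', π^l]]·Y if and only if min{δ(a), k−j} = min{δ(a'), k−j} and a ≡ a' mod π^{min{ε + δ(a), k−j}}. -/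
open Matrix

/-- The valuation of `x`, truncated at the length `k`: the largest `m ≤ k` with
`π ^ m ∣ x`.  In particular `pval π k 0 = k`. -/
noncomputable def pval {A : Type*} [CommRing A] (π : A) (k : ℕ) (x : A) : ℕ :=
  sSup {m : ℕ | m ≤ k ∧ π ^ m ∣ x}

/-!
Write `δ = v(a - 1)`, `δ' = v(a' - 1)` and `M(a) = [[π^i, 1], [π^j a, π^l]]`. Comparing the
entries of `X M(a) = M(a') Y` and cancelling powers of `π` (using that the annihilator of `π^m`
is `(π^(k-m))`) shows that the unit `X₁₁` times `a - a'` lies in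
`(π^(k-j), π^(l+δ), π^(i+δ'))`, so `π^N ∣ a - a'` with `N = min(i + δ', l + δ, k - j)`.
Since `a - a' = (a - 1) - (a' - 1)`, the ultrametric inequality then forces
`min(δ, k - j) = min(δ', k - j)`, and under that condition `N` is the exponent in the statement.
Conversely, according to which term realises `N`, either `π^j a = π^j a'`, or
`a - a' = π^i (a' - 1) w`, or `a - a' = π^l (a - 1) w`; in each case explicit `X` and `Y`, one
of them diagonal, can be written down, their diagonal entries being units because `π` is
nilpotent.
-/

section UpperTriangular

variable {A : Type*} [CommRing A]

lemma isUT_iff {n : ℕ} (M : Matrix (Fin n) (Fin n) A) :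
    IsUT M ↔ M.BlockTriangular id ∧ ∀ p, IsUnit (M p p) :=
  and_congr_right fun hM => by
    rw [isUnit_iff_isUnit_det, det_of_isUpperTriangular hM, IsUnit.prod_univ_iff]

lemma isUT_fin_two_of_isUnit {x y z : A} (hx : IsUnit x) (hz : IsUnit z) :
    IsUT !![x, y; 0, z] := by
  refine (isUT_iff _).2 ⟨fun p q h => ?_, fun p => ?_⟩
  · fin_cases p <;> fin_cases q <;> simp_all
  · fin_cases p <;> simpa

lemma isUnit_one_add_pow_mul {π : A} (hπ : IsNilpotent π) {i : ℕ} (hi : i ≠ 0) (w : A) :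
    IsUnit (1 + π ^ i * w) :=
  ((Commute.all _ w).isNilpotent_mul_right (hπ.pow_of_pos hi)).isUnit_one_add

def IsUTEquiv {n : ℕ} (M N : Matrix (Fin n) (Fin n) A) : Prop :=
  ∃ X Y : Matrix (Fin n) (Fin n) A, IsUT X ∧ IsUT Y ∧ X * M = N * Y

end UpperTriangular

section Valuation

variable {A : Type*} [CommRing A] {π : A} {k : ℕ} {x y : A}

lemma pow_pval_dvd (π : A) (k : ℕ) (x : A) : π ^ pval π k x ∣ x :=
  (Nat.sSup_mem (s := {m | m ≤ k ∧ π ^ m ∣ x}) ⟨0, by simp⟩ ⟨k, fun _ hm => hm.1⟩).2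

lemma le_pval {m : ℕ} (hm : m ≤ k) (h : π ^ m ∣ x) : m ≤ pval π k x :=
  le_csSup ⟨k, fun _ hn => hn.1⟩ ⟨hm, h⟩

lemma min_pval_eq_of_pow_dvd_sub {n : ℕ} (hn : n ≤ k) (h : π ^ n ∣ x - y) :
    min (pval π k x) n = min (pval π k y) n := by
  have key : ∀ {x y : A}, π ^ n ∣ x - y → min (pval π k x) n ≤ pval π k y := fun {x y} h =>
    le_pval (by omega) <| by
      simpa using dvd_sub ((pow_dvd_pow π (min_le_left _ _)).trans (pow_pval_dvd π k x))
        ((pow_dvd_pow π (min_le_right _ _)).trans h)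
  have := key h
  have := key (dvd_sub_comm.1 h)
  omega

variable [IsLocalRing A]

lemma exists_isUnit_eq_pow_pval_mul (hmax : IsLocalRing.maximalIdeal A = Ideal.span {π})
    (hx : pval π k x < k) : ∃ u : A, IsUnit u ∧ x = π ^ pval π k x * u := by
  obtain ⟨u, hu⟩ := pow_pval_dvd π k x
  refine ⟨u, by_contra fun hu' => ?_, hu⟩
  obtain ⟨d, rfl⟩ := Ideal.mem_span_singleton'.1 (hmax ▸ hu' : u ∈ Ideal.span {π})
  have := le_pval (m := pval π k x + 1) hx ⟨d, hu.trans (by ring)⟩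
  omega

lemma exists_eq_pow_mul_mul_of_pow_add_pval_dvd
    (hmax : IsLocalRing.maximalIdeal A = Ideal.span {π}) (hx : pval π k x < k) {n : ℕ}
    (h : π ^ (n + pval π k x) ∣ y) : ∃ w, y = π ^ n * x * w := by
  obtain ⟨u, hu, hxu⟩ := exists_isUnit_eq_pow_pval_mul hmax hx
  obtain ⟨c, rfl⟩ := h
  obtain ⟨v, hv⟩ := hu.exists_right_inv
  exact ⟨v * c, by
    rw [pow_add]
    linear_combination (-(π ^ n * v * c)) * hxu - (π ^ n * π ^ pval π k x * c) * hv⟩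

lemma pow_sub_dvd_of_pow_mul_eq_zero (hmax : IsLocalRing.maximalIdeal A = Ideal.span {π})
    (hk1 : π ^ (k - 1) ≠ 0) {m : ℕ} (h : π ^ m * y = 0) :
    π ^ (k - m) ∣ y := by
  suffices k ≤ m + pval π k y from (pow_dvd_pow π (by omega)).trans (pow_pval_dvd π k y)
  by_contra! hlt
  obtain ⟨u, hu, hyu⟩ := exists_isUnit_eq_pow_pval_mul hmax (show pval π k y < k by omega)
  have hzero : π ^ (m + pval π k y) = 0 := by
    rw [← hu.mul_left_eq_zero, pow_add, mul_assoc, ← hyu, h]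
  exact hk1 (pow_eq_zero_of_le (by omega) hzero)

end Valuation

section PiMatrix

variable {A : Type*} [CommRing A] (π : A) (i l : ℕ)

def piMatrix (a : A) : Matrix (Fin 2) (Fin 2) A := !![π ^ i, 1; π ^ (i + l) * a, π ^ l]

variable {π i l} {a a' : A}

lemma isUTEquiv_piMatrix_of_pow_sub_dvd {k : ℕ} (hk0 : π ^ k = 0) (hilk : i + l ≤ k)
    (h : π ^ (k - (i + l)) ∣ a - a') : IsUTEquiv (piMatrix π i l a) (piMatrix π i l a') := by
  obtain ⟨c, hc⟩ := h
  have hzero : π ^ (i + l) * π ^ (k - (i + l)) = 0 := by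
    rw [← pow_add, Nat.add_sub_cancel' hilk, hk0]
  have heq : π ^ (i + l) * a = π ^ (i + l) * a' := by
    linear_combination π ^ (i + l) * hc + c * hzero
  exact ⟨1, 1, ⟨blockTriangular_one, isUnit_one⟩, ⟨blockTriangular_one, isUnit_one⟩, by
    simp [piMatrix, heq]⟩

lemma isUTEquiv_piMatrix_of_sub_eq_left (hπ : IsNilpotent π) (hi : i ≠ 0) (ha : IsUnit a)
    (ha' : IsUnit a') (w : A) (h : a - a' = π ^ i * (a' - 1) * w) :
    IsUTEquiv (piMatrix π i l a) (piMatrix π i l a') := by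
  obtain ⟨u, rfl⟩ := ha'
  refine ⟨!![a * ↑u⁻¹, 0; 0, 1], !![a * ↑u⁻¹, -(↑u⁻¹ * w); 0, 1 + π ^ i * w],
    isUT_fin_two_of_isUnit (ha.mul u⁻¹.isUnit) isUnit_one,
    isUT_fin_two_of_isUnit (ha.mul u⁻¹.isUnit) (isUnit_one_add_pow_mul hπ hi w), ?_⟩
  have hu := u.mul_inv
  ext p q
  fin_cases p <;> fin_cases q <;>
    simp only [piMatrix, mul_apply, Fin.sum_univ_two, of_apply, cons_val', cons_val_zero,
      cons_val_one, cons_val_fin_one, Fin.zero_eta, Fin.mk_one]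
  · ring
  · linear_combination (↑u⁻¹ : A) * h + (1 + π ^ i * w) * hu
  · linear_combination (-(π ^ (i + l) * a)) * hu
  · linear_combination (π ^ (i + l) * w) * hu

lemma isUTEquiv_piMatrix_of_sub_eq_right (hπ : IsNilpotent π) (hl : l ≠ 0) (ha : IsUnit a)
    (ha' : IsUnit a') (w : A) (h : a - a' = π ^ l * (a - 1) * w) :
    IsUTEquiv (piMatrix π i l a) (piMatrix π i l a') := by
  obtain ⟨u, rfl⟩ := ha'
  refine ⟨!![1 + π ^ l * -(↑u⁻¹ * w), ↑u⁻¹ * w; 0, 1], !![a * ↑u⁻¹, 0; 0, 1],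
    isUT_fin_two_of_isUnit (isUnit_one_add_pow_mul hπ hl _) isUnit_one,
    isUT_fin_two_of_isUnit (ha.mul u⁻¹.isUnit) isUnit_one, ?_⟩
  have hu := u.mul_inv
  ext p q
  fin_cases p <;> fin_cases q <;>
    simp only [piMatrix, mul_apply, Fin.sum_univ_two, of_apply, cons_val', cons_val_zero,
      cons_val_one, cons_val_fin_one, Fin.zero_eta, Fin.mk_one]
  · linear_combination (-(π ^ i * ↑u⁻¹)) * h - π ^ i * hu
  · ring
  · linear_combination (-(π ^ (i + l) * a)) * hu
  · ring

lemma pow_dvd_sub_of_isUTEquiv_piMatrix [IsLocalRing A] {k : ℕ}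
    (hmax : IsLocalRing.maximalIdeal A = Ideal.span {π}) (hk1 : π ^ (k - 1) ≠ 0)
    (h : IsUTEquiv (piMatrix π i l a) (piMatrix π i l a')) {d d' : ℕ}
    (hd : π ^ d ∣ a - 1) (hd' : π ^ d' ∣ a' - 1) :
    π ^ min (min (i + d') (l + d)) (k - (i + l)) ∣ a - a' := by
  obtain ⟨X, Y, hX, hY, hXY⟩ := h
  have hX10 : X 1 0 = 0 := hX.1 (by decide)
  have hY10 : Y 1 0 = 0 := hY.1 (by decide)
  have e00 := congrFun₂ hXY 0 0
  have e01 := congrFun₂ hXY 0 1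
  have e10 := congrFun₂ hXY 1 0
  have e11 := congrFun₂ hXY 1 1
  simp only [piMatrix, mul_apply, of_apply, cons_val', cons_val_zero, cons_val_one,
    cons_val_fin_one, Fin.sum_univ_two, hX10, hY10, mul_zero, zero_mul, add_zero, zero_add,
    mul_one, one_mul] at e00 e01 e10 e11
  obtain ⟨s, hs⟩ := pow_sub_dvd_of_pow_mul_eq_zero hmax hk1 (m := i)
    (y := X 0 0 - Y 0 0 + π ^ l * a * X 0 1) (by linear_combination e00)
  obtain ⟨t, ht⟩ := pow_sub_dvd_of_pow_mul_eq_zero hmax hk1 (m := l)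
    (y := X 1 1 - Y 1 1 - π ^ i * a' * Y 0 1) (by linear_combination e11)
  obtain ⟨c, hc⟩ := pow_sub_dvd_of_pow_mul_eq_zero hmax hk1 (m := i + l)
    (y := X 1 1 * a - a' * Y 0 0) (by linear_combination e10)
  obtain ⟨e, he⟩ := hd
  obtain ⟨e', he'⟩ := hd'
  -- `e01` expresses `Y 0 0 - X 1 1` through `a - 1` and `a' - 1` up to multiples of
  -- `π^(k-i)` and `π^(k-l)`; `e10` then compares `X 1 1 * a` with `a' * Y 0 0`.
  have key : X 1 1 * (a - a') = π ^ (k - (i + l)) * c + π ^ (l + d) * (a' * X 0 1 * e)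
      - π ^ (i + d') * (a' * Y 0 1 * e') - π ^ (k - i) * (a' * s) - π ^ (k - l) * (a' * t) := by
    rw [pow_add, pow_add]
    linear_combination hc + a' * e01 - a' * hs - a' * ht + (a' * π ^ l * X 0 1) * he
      - (a' * π ^ i * Y 0 1) * he'
  have hx11 : IsUnit (X 1 1) := ((isUT_iff X).1 hX).2 1
  rw [← hx11.dvd_mul_left, key]
  refine dvd_sub (dvd_sub (dvd_sub (dvd_add ?_ ?_) ?_) ?_) ?_ <;>
    exact (pow_dvd_pow π (by omega)).mul_right _

end PiMatrix

theorem stmt8_general {A : Type*} [CommRing A] [IsLocalRing A]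
    (π : A) (k i j l : ℕ) (hmax : IsLocalRing.maximalIdeal A = Ideal.span {π})
    (hk0 : π ^ k = 0) (hk1 : π ^ (k - 1) ≠ 0)
    (hjk : j < k) (hi : 0 < i) (hl : 0 < l)
    (hsum : j = i + l) (a a' : A) (ha : IsUnit a) (ha' : IsUnit a') :
    (∃ X Y : Matrix (Fin 2) (Fin 2) A, IsUT X ∧ IsUT Y ∧
        X * !![π ^ i, 1; π ^ j * a, π ^ l] = !![π ^ i, 1; π ^ j * a', π ^ l] * Y) ↔
      (min (pval π k (a - 1)) (k - j) = min (pval π k (a' - 1)) (k - j) ∧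
        π ^ min (min (min (j - i) (j - l)) (min i l) + pval π k (a - 1)) (k - j) ∣
          (a - a')) := by
  subst hsum
  change IsUTEquiv (piMatrix π i l a) (piMatrix π i l a') ↔ _
  set δ := pval π k (a - 1)
  set δ' := pval π k (a' - 1)
  set N := min (min (i + δ') (l + δ)) (k - (i + l))
  have hexp : min δ (k - (i + l)) = min δ' (k - (i + l)) →
      min (min (min (i + l - i) (i + l - l)) (min i l) + δ) (k - (i + l)) = N := by
    omega
  constructor
  · intro h
    have hdvd : π ^ N ∣ a - a' :=
      pow_dvd_sub_of_isUTEquiv_piMatrix hmax hk1 h (pow_pval_dvd π k _) (pow_pval_dvd π k _)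
    have hmin : min δ N = min δ' N :=
      min_pval_eq_of_pow_dvd_sub (by omega) (by rwa [sub_sub_sub_cancel_right])
    have hmin' : min δ (k - (i + l)) = min δ' (k - (i + l)) := by omega
    exact ⟨hmin', hexp hmin' ▸ hdvd⟩
  · rintro ⟨hmin, hdvd⟩
    rw [hexp hmin] at hdvd
    rcases (by omega : N = k - (i + l) ∨ (N = i + δ' ∧ δ' < k) ∨ (N = l + δ ∧ δ < k)) with
      hN | ⟨hN, hδ'⟩ | ⟨hN, hδ⟩
    · exact isUTEquiv_piMatrix_of_pow_sub_dvd hk0 hjk.le (hN ▸ hdvd)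
    · obtain ⟨w, hw⟩ := exists_eq_pow_mul_mul_of_pow_add_pval_dvd hmax hδ' (hN ▸ hdvd)
      exact isUTEquiv_piMatrix_of_sub_eq_left ⟨k, hk0⟩ hi.ne' ha ha' w hw
    · obtain ⟨w, hw⟩ := exists_eq_pow_mul_mul_of_pow_add_pval_dvd hmax hδ (hN ▸ hdvd)
      exact isUTEquiv_piMatrix_of_sub_eq_right ⟨k, hk0⟩ hl.ne' ha ha' w hw

theorem stmt8 {A : Type*} [CommRing A] [IsLocalRing A] [IsPrincipalIdealRing A]
    (π : A) (k i j l : ℕ) (hmax : IsLocalRing.maximalIdeal A = Ideal.span {π})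
    (hk0 : π ^ k = 0) (hk1 : π ^ (k - 1) ≠ 0)
    (hjk : j < k) (hij : i < j) (hlj : l < j) (hi : 0 < i) (hl : 0 < l)
    (hsum : j = i + l) (a a' : A) (ha : IsUnit a) (ha' : IsUnit a') :
    (∃ X Y : Matrix (Fin 2) (Fin 2) A, IsUT X ∧ IsUT Y ∧
        X * !![π ^ i, 1; π ^ j * a, π ^ l] = !![π ^ i, 1; π ^ j * a', π ^ l] * Y) ↔
      (min (pval π k (a - 1)) (k - j) = min (pval π k (a' - 1)) (k - j) ∧
        π ^ min (min (min (j - i) (j - l)) (min i l) + pval π k (a - 1)) (k - j) ∣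
          (a - a')) :=
  stmt8_general π k i j l hmax hk0 hk1 hjk hi hl hsum a a' ha ha'
end

section
/- Let A be a commutative local principal ideal ring with maximal ideal (π) of length k, and let M₂^• denote the set of 2×2 matrices over A whose top-right entry is a unit and whose other three entries lie in (π) and are non-units. Then every matrix in M₂^• can be transformed, by left and right multiplication by invertible upper triangular 2×2 matrices, into a matrix of the form [[π^i, u],[π^j b, π^l]] where u is a unit, b is a unit or zero, and the valuations satisfy i ≤ j and l ≤ j (standard form). -/
open Matrix

/-!
Write every entry as `π ^ n * w` with `w` a unit, and let `M 1 0 = π ^ j * b`. If `M 0 0` has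
valuation at most `j`, rescale the first row; otherwise adding `b⁻¹` times the second row to the
first makes the `(0,0)` entry `π ^ j` times a unit. The same trick on columns handles `M 1 1`.
These operations leave `M 1 0` alone, and the `(0,1)` entry stays a unit because everything
added to it lies in the maximal ideal.
-/

section LocalRing

variable {A : Type*} [CommRing A] [IsLocalRing A]

open IsLocalRing

theorem isUnit_add_of_mem_maximalIdeal_s14 {x y : A} (hx : IsUnit x) (hy : y ∈ maximalIdeal A) :
    IsUnit (x + y) :=
  notMem_maximalIdeal.1 fun h ↦ notMem_maximalIdeal.2 hx ((Ideal.add_mem_iff_left _ hy).1 h)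

theorem exists_eq_pow_mul_unit {π : A} {k : ℕ} (hmax : maximalIdeal A = Ideal.span {π})
    (hk : π ^ k = 0) (a : A) : ∃ (n : ℕ) (w : Aˣ), a = π ^ n * w := by
  suffices h : ∀ d m (c : A), k ≤ m + d → ∃ (n : ℕ) (w : Aˣ), π ^ m * c = π ^ n * w by
    simpa using h k 0 a (by omega)
  intro d
  induction d with
  | zero =>
    intro m c hm
    refine ⟨m, 1, ?_⟩
    rw [← Nat.sub_add_cancel (show k ≤ m by omega), pow_add, hk]
    simp
  | succ d ih =>
    intro m c hm
    by_cases hc : IsUnit c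
    · exact ⟨m, hc.unit, rfl⟩
    · have hcπ : c ∈ Ideal.span {π} := hmax ▸ (mem_maximalIdeal c).2 hc
      obtain ⟨c', rfl⟩ := Ideal.mem_span_singleton.1 hcπ
      simpa [pow_succ, mul_assoc] using ih (m + 1) c' (by omega)

theorem exists_unit_mul_add_mul_eq_pow {π : A} (hπ : π ∈ maximalIdeal A) (n j : ℕ)
    (w b : Aˣ) : ∃ (s : A) (e : Aˣ) (i : ℕ), i ≤ j ∧
      e * (π ^ n * w + s * (π ^ j * b)) = π ^ i := by
  by_cases hnj : n ≤ j
  · exact ⟨0, w⁻¹, n, hnj, by simp [mul_left_comm]⟩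
  · have hsplit : π ^ n * w + b⁻¹ * (π ^ j * b) = π ^ j * (1 + π ^ (n - j) * w) := by
      rw [mul_left_comm, Units.inv_mul, mul_one, ← Nat.add_sub_of_le (le_of_not_ge hnj),
        pow_add, Nat.add_sub_cancel_left]
      ring
    have hunit : IsUnit (1 + π ^ (n - j) * w) :=
      isUnit_add_of_mem_maximalIdeal_s14 isUnit_one <| Ideal.mul_mem_right _ _ <|
        Ideal.pow_mem_of_mem _ hπ _ (by omega)
    refine ⟨↑b⁻¹, hunit.unit⁻¹, j, le_rfl, ?_⟩
    rw [hsplit, mul_left_comm, IsUnit.val_inv_mul, mul_one]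

end LocalRing

theorem isUT_fin_two {A : Type*} [CommRing A] {p r : A} (q : A) (hp : IsUnit p)
    (hr : IsUnit r) : IsUT !![p, q; 0, r] := by
  refine ⟨fun i j hij ↦ ?_, ?_⟩
  · fin_cases i <;> fin_cases j <;> simp_all
  · rw [isUnit_iff_isUnit_det, det_fin_two_of]
    simpa using hp.mul hr

theorem row_col_operation_fin_two {A : Type*} [CommRing A] (a u c d e s t f : A) :
    !![e, e * s; 0, 1] * !![a, u; c, d] * !![1, t * f; 0, f] =
      !![e * (a + s * c), e * f * (u + (s * d + (a + s * c) * t)); c, f * (d + t * c)] := by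
  simp only [mul_fin_two]
  congr 1
  ext i j
  fin_cases i <;> fin_cases j <;> simp <;> ring

theorem stmt14_general {A : Type*} [CommRing A] [IsLocalRing A]
    (π : A) (k : ℕ) (hmax : IsLocalRing.maximalIdeal A = Ideal.span {π})
    (hk0 : π ^ k = 0)
    (M : Matrix (Fin 2) (Fin 2) A) (h01 : IsUnit (M 0 1))
    (h00 : M 0 0 ∈ Ideal.span {π} ∧ ¬IsUnit (M 0 0))
    (h10 : M 1 0 ∈ Ideal.span {π} ∧ ¬IsUnit (M 1 0))
    (h11 : M 1 1 ∈ Ideal.span {π} ∧ ¬IsUnit (M 1 1)) :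
    ∃ X Y : Matrix (Fin 2) (Fin 2) A, IsUT X ∧ IsUT Y ∧
      ∃ (i j l : ℕ) (u b : A), IsUnit u ∧ (IsUnit b ∨ b = 0) ∧ i ≤ j ∧ l ≤ j ∧
        X * M * Y = !![π ^ i, u; π ^ j * b, π ^ l] := by
  have hπ : π ∈ IsLocalRing.maximalIdeal A := hmax ▸ Ideal.mem_span_singleton_self π
  have hmem {x : A} (hx : ¬IsUnit x) : x ∈ IsLocalRing.maximalIdeal A :=
    (IsLocalRing.mem_maximalIdeal x).2 hx
  obtain ⟨n, w, ha⟩ := exists_eq_pow_mul_unit hmax hk0 (M 0 0)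
  obtain ⟨j, b, hc⟩ := exists_eq_pow_mul_unit hmax hk0 (M 1 0)
  obtain ⟨m, w', hd⟩ := exists_eq_pow_mul_unit hmax hk0 (M 1 1)
  obtain ⟨s, e, i, hij, hrow⟩ := exists_unit_mul_add_mul_eq_pow hπ n j w b
  obtain ⟨t, f, l, hlj, hcol⟩ := exists_unit_mul_add_mul_eq_pow hπ m j w' b
  rw [← ha, ← hc] at hrow
  rw [← hd, ← hc] at hcol
  have hcorner : IsUnit (e * f * (M 0 1 + (s * M 1 1 + (M 0 0 + s * M 1 0) * t))) := by
    refine (e.isUnit.mul f.isUnit).mul (isUnit_add_of_mem_maximalIdeal_s14 h01 ?_)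
    exact add_mem (Ideal.mul_mem_left _ _ (hmem h11.2)) <| Ideal.mul_mem_right _ _ <|
      add_mem (hmem h00.2) (Ideal.mul_mem_left _ _ (hmem h10.2))
  refine ⟨!![e, e * s; 0, 1], !![1, t * f; 0, f], isUT_fin_two _ e.isUnit isUnit_one,
    isUT_fin_two _ isUnit_one f.isUnit, i, j, l, _, b, hcorner, .inl b.isUnit, hij, hlj, ?_⟩
  conv_lhs => rw [eta_fin_two M, row_col_operation_fin_two, hrow, hcol]
  rw [hc]

theorem stmt14 {A : Type*} [CommRing A] [IsLocalRing A] [IsPrincipalIdealRing A]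
    (π : A) (k : ℕ) (hmax : IsLocalRing.maximalIdeal A = Ideal.span {π})
    (hk0 : π ^ k = 0) (hk1 : π ^ (k - 1) ≠ 0)
    (M : Matrix (Fin 2) (Fin 2) A) (h01 : IsUnit (M 0 1))
    (h00 : M 0 0 ∈ Ideal.span {π} ∧ ¬IsUnit (M 0 0))
    (h10 : M 1 0 ∈ Ideal.span {π} ∧ ¬IsUnit (M 1 0))
    (h11 : M 1 1 ∈ Ideal.span {π} ∧ ¬IsUnit (M 1 1)) :
    ∃ X Y : Matrix (Fin 2) (Fin 2) A, IsUT X ∧ IsUT Y ∧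
      ∃ (i j l : ℕ) (u b : A), IsUnit u ∧ (IsUnit b ∨ b = 0) ∧ i ≤ j ∧ l ≤ j ∧
        X * M * Y = !![π ^ i, u; π ^ j * b, π ^ l] :=
  stmt14_general π k hmax hk0 M h01 h00 h10 h11
end

section
/- Let A be a commutative local principal ideal ring of finite length k with maximal ideal (π), and let i, j, l, j', a be as follows: k > j > max{i,l} ≥ min{i,l} > 0 and a, a' units in A. Then the equation (1 − a'a^{−1})y₁₁ = (π^{j−i}a + π^l)x₁₂ + (π^i − π^{j−l}a')y₁₂ has a solution with y₁₁ a unit and x₁₂, y₁₂ ∈ A, considered modulo π^{k−j}, if and only if v(a − a') ≥ min{ v(π^{j−i}a + π^l), v(π^i − a'π^{j−l}), k−j }. -/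
section pval

variable {A : Type*} [CommRing A] {π : A} {k m : ℕ} {x : A}

lemma pval_mem : pval π k x ∈ {m : ℕ | m ≤ k ∧ π ^ m ∣ x} :=
  Nat.sSup_mem ⟨0, by simp⟩ ⟨k, fun _ hm => hm.1⟩

lemma pow_dvd_iff_le_pval (hm : m ≤ k) : π ^ m ∣ x ↔ m ≤ pval π k x :=
  ⟨fun hd => le_csSup ⟨k, fun _ hn => hn.1⟩ ⟨hm, hd⟩,
    fun h => (pow_dvd_pow π h).trans pval_mem.2⟩

end pval

section LocalRing

variable {A : Type*} [CommRing A] [IsLocalRing A] {π : A} {k : ℕ}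

lemma exists_isUnit_mul_pow_pval (hmax : IsLocalRing.maximalIdeal A = Ideal.span {π})
    (hk0 : π ^ k = 0) (x : A) : ∃ u : A, IsUnit u ∧ x = u * π ^ pval π k x := by
  obtain ⟨hle, y, hy⟩ := pval_mem (π := π) (k := k) (x := x)
  by_cases hu : IsUnit y
  · exact ⟨y, hu, hy.trans (mul_comm _ _)⟩
  rcases hle.eq_or_lt with hv | hv
  · exact ⟨1, isUnit_one, by rw [hv, hk0, mul_zero]; rwa [hv, hk0, zero_mul] at hy⟩
  -- a non-unit `y` is divisible by `π`, contradicting maximality of `pval π k x`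
  have hy𝔪 : y ∈ Ideal.span {π} := hmax ▸ (IsLocalRing.mem_maximalIdeal y).mpr hu
  obtain ⟨z, rfl⟩ := Ideal.mem_span_singleton.mp hy𝔪
  have hdvd : π ^ (pval π k x + 1) ∣ x := ⟨z, hy.trans (by ring)⟩
  have := (pow_dvd_iff_le_pval hv).mp hdvd
  omega

lemma span_singleton_eq_span_pow_pval (hmax : IsLocalRing.maximalIdeal A = Ideal.span {π})
    (hk0 : π ^ k = 0) (x : A) : Ideal.span {x} = Ideal.span {π} ^ pval π k x := by
  obtain ⟨u, hu, hx⟩ := exists_isUnit_mul_pow_pval hmax hk0 x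
  rw [Ideal.span_singleton_pow, ← Ideal.span_singleton_mul_left_unit hu (π ^ pval π k x), ← hx]

end LocalRing

lemma Ideal.pow_sup_pow {R : Type*} [CommRing R] (I : Ideal R) (m n : ℕ) :
    I ^ m ⊔ I ^ n = I ^ min m n := by
  rcases le_total m n with h | h
  · rw [min_eq_left h, sup_eq_left.mpr (Ideal.pow_le_pow_right h)]
  · rw [min_eq_right h, sup_eq_right.mpr (Ideal.pow_le_pow_right h)]

section Congruence

variable {R : Type*} [CommRing R] (c d e z : R)

lemma exists_dvd_sub_iff_mem_span_sup :
    (∃ x₁ x₂ : R, z ∣ c - (d * x₁ + e * x₂)) ↔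
      c ∈ Ideal.span {d} ⊔ Ideal.span {e} ⊔ Ideal.span {z} := by
  rw [← Ideal.span_insert, Submodule.mem_sup]
  constructor
  · rintro ⟨x₁, x₂, hz⟩
    exact ⟨d * x₁ + e * x₂, Ideal.mem_span_pair.mpr ⟨x₁, x₂, by ring⟩, _,
      Ideal.mem_span_singleton.mpr hz, add_sub_cancel _ _⟩
  · rintro ⟨p, hp, q, hq, rfl⟩
    obtain ⟨x₁, x₂, rfl⟩ := Ideal.mem_span_pair.mp hp
    refine ⟨x₁, x₂, ?_⟩
    rw [mul_comm d, mul_comm e, add_sub_cancel_left]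
    exact Ideal.mem_span_singleton.mp hq

lemma exists_isUnit_dvd_sub_iff_mem_span_sup :
    (∃ y x₁ x₂ : R, IsUnit y ∧ z ∣ c * y - (d * x₁ + e * x₂)) ↔
      c ∈ Ideal.span {d} ⊔ Ideal.span {e} ⊔ Ideal.span {z} := by
  constructor
  · rintro ⟨y, x₁, x₂, hy, hz⟩
    rw [← Ideal.unit_mul_mem_iff_mem _ hy, mul_comm]
    exact (exists_dvd_sub_iff_mem_span_sup _ d e z).mp ⟨x₁, x₂, hz⟩
  · intro hc
    obtain ⟨x₁, x₂, hz⟩ := (exists_dvd_sub_iff_mem_span_sup c d e z).mpr hc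
    exact ⟨1, x₁, x₂, isUnit_one, by rwa [mul_one]⟩

end Congruence

theorem stmt16_general {A : Type*} [CommRing A] [IsLocalRing A]
    (π : A) (k i j l : ℕ) (hmax : IsLocalRing.maximalIdeal A = Ideal.span {π})
    (hk0 : π ^ k = 0)
    (a a' : A) (ha : IsUnit a) :
    (∃ y₁₁ x₁₂ y₁₂ : A, IsUnit y₁₁ ∧
        π ^ (k - j) ∣ ((1 - a' * Ring.inverse a) * y₁₁ -
          ((π ^ (j - i) * a + π ^ l) * x₁₂ + (π ^ i - π ^ (j - l) * a') * y₁₂))) ↔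
      pval π k (a - a') ≥
        min (min (pval π k (π ^ (j - i) * a + π ^ l))
          (pval π k (π ^ i - a' * π ^ (j - l)))) (k - j) := by
  set d := π ^ (j - i) * a + π ^ l
  set e := π ^ i - a' * π ^ (j - l)
  set M := min (min (pval π k d) (pval π k e)) (k - j)
  have hJ : Ideal.span {d} ⊔ Ideal.span {e} ⊔ Ideal.span {π ^ (k - j)} = Ideal.span {π ^ M} := by
    rw [span_singleton_eq_span_pow_pval hmax hk0 d, span_singleton_eq_span_pow_pval hmax hk0 e,
      ← Ideal.span_singleton_pow π, ← Ideal.span_singleton_pow π, Ideal.pow_sup_pow,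
      Ideal.pow_sup_pow]
  have hc : 1 - a' * Ring.inverse a = (a - a') * Ring.inverse a := by
    rw [sub_mul, Ring.mul_inverse_cancel a ha]
  rw [mul_comm (π ^ (j - l)) a', exists_isUnit_dvd_sub_iff_mem_span_sup, hJ,
    Ideal.mem_span_singleton, hc, ha.ringInverse.dvd_mul_right, ge_iff_le,
    pow_dvd_iff_le_pval ((min_le_right _ _).trans (k.sub_le j))]

theorem stmt16 {A : Type*} [CommRing A] [IsLocalRing A] [IsPrincipalIdealRing A]
    (π : A) (k i j l : ℕ) (hmax : IsLocalRing.maximalIdeal A = Ideal.span {π})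
    (hk0 : π ^ k = 0) (hk1 : π ^ (k - 1) ≠ 0)
    (hjk : j < k) (hij : i < j) (hlj : l < j) (hi : 0 < i) (hl : 0 < l)
    (a a' : A) (ha : IsUnit a) (ha' : IsUnit a') :
    (∃ y₁₁ x₁₂ y₁₂ : A, IsUnit y₁₁ ∧
        π ^ (k - j) ∣ ((1 - a' * Ring.inverse a) * y₁₁ -
          ((π ^ (j - i) * a + π ^ l) * x₁₂ + (π ^ i - π ^ (j - l) * a') * y₁₂))) ↔
      pval π k (a - a') ≥
        min (min (pval π k (π ^ (j - i) * a + π ^ l))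
          (pval π k (π ^ i - a' * π ^ (j - l)))) (k - j) :=
  stmt16_general π k i j l hmax hk0 a a' ha
end

section
/- Let A be a commutative local principal ideal ring of finite length k with maximal ideal (π), and suppose a, a' are units of A such that [[π^i,1],[π^{i+l}a, π^l]] and [[π^i,1],[π^{i+l}a', π^l]] (with k > i+l, i, l > 0) satisfy X·[[π^i,1],[π^{i+l}a,π^l]] = [[π^i,1],[π^{i+l}a',π^l]]·Y for some invertible upper triangular 2×2 matrices X, Y. Then min{k−i−l, v(a−1)} = min{k−i−l, v(a'−1)}. -/
/-!
Write `M a = !![π ^ i, 1; π ^ (i + l) * a, π ^ l]`.  The determinants of the two sides of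
`X * M a = M a' * Y` differ by a unit, and `det (M a) = -π ^ (i + l) * (a - 1)`.  Hence
`π ^ (i + l) * (a - 1)` and `π ^ (i + l) * (a' - 1)` have the same truncated valuation.  Every
element of `A` is a unit times a power of `π`, so this valuation is `min k (i + l + v (a - 1))`,
and subtracting `i + l` gives the claim.
-/

open Matrix

section Valuation

variable {A : Type*} [CommRing A] {π : A} {k : ℕ}

theorem le_of_pow_eq_zero (hk1 : π ^ (k - 1) ≠ 0) {j : ℕ} (hj : π ^ j = 0) : k ≤ j := by
  by_contra! hjk
  exact hk1 (pow_eq_zero_of_le (by omega) hj)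

theorem le_of_pow_dvd_pow (hk0 : π ^ k = 0) (hk1 : π ^ (k - 1) ≠ 0) {m n : ℕ} (hmk : m ≤ k)
    (h : π ^ m ∣ π ^ n) : m ≤ n := by
  obtain ⟨c, hc⟩ := h
  have : π ^ (n + (k - m)) = 0 := by
    rw [pow_add, hc, mul_right_comm, ← pow_add, Nat.add_sub_cancel' hmk, hk0, zero_mul]
  have := le_of_pow_eq_zero hk1 this
  omega

theorem Associated.pval_eq {x y : A} (h : Associated x y) : pval π k x = pval π k y := by
  obtain ⟨u, rfl⟩ := h
  simp only [pval, Units.dvd_mul_right]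

theorem pval_unit_mul_pow (hk0 : π ^ k = 0) (hk1 : π ^ (k - 1) ≠ 0) {u : A} (hu : IsUnit u)
    (n : ℕ) : pval π k (u * π ^ n) = min k n := by
  have hset : {m : ℕ | m ≤ k ∧ π ^ m ∣ u * π ^ n} = Set.Iic (min k n) := by
    ext m
    simp only [Set.mem_ofPred_eq, Set.mem_Iic, le_min_iff, hu.dvd_mul_left]
    exact and_congr_right fun hmk ↦ ⟨le_of_pow_dvd_pow hk0 hk1 hmk, pow_dvd_pow π⟩
  rw [pval, hset, csSup_Iic]

theorem exists_isUnit_mul_pow [IsLocalRing A]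
    (hmax : IsLocalRing.maximalIdeal A = Ideal.span {π}) (hk0 : π ^ k = 0) (y : A) :
    ∃ u n, IsUnit u ∧ y = u * π ^ n := by
  classical
  set n := Nat.findGreatest (fun m ↦ π ^ m ∣ y) k
  -- `n` is maximal with `π ^ n ∣ y`; the cofactor is a unit unless `n = k`, and then `y = 0`.
  obtain ⟨c, hc⟩ : π ^ n ∣ y :=
    Nat.findGreatest_spec (P := fun m ↦ π ^ m ∣ y) (Nat.zero_le k) (by simp)
  by_cases hcu : IsUnit c
  · exact ⟨c, n, hcu, by rw [hc, mul_comm]⟩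
  have hπc : π ∣ c := by
    rw [← Ideal.mem_span_singleton, ← hmax]
    exact hcu
  have hnk : n = k := by
    by_contra hnk
    refine Nat.findGreatest_is_greatest (Nat.lt_succ_self n)
      (lt_of_le_of_ne (Nat.findGreatest_le k) hnk) ?_
    rw [hc, pow_succ]
    exact mul_dvd_mul_left _ hπc
  exact ⟨1, k, isUnit_one, by rw [hc, hnk, hk0, zero_mul, one_mul]⟩

theorem pval_pow_mul [IsLocalRing A] (hmax : IsLocalRing.maximalIdeal A = Ideal.span {π})
    (hk0 : π ^ k = 0) (hk1 : π ^ (k - 1) ≠ 0) (j : ℕ) (x : A) :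
    pval π k (π ^ j * x) = min k (j + pval π k x) := by
  obtain ⟨u, n, hu, rfl⟩ := exists_isUnit_mul_pow hmax hk0 x
  rw [mul_left_comm, ← pow_add, pval_unit_mul_pow hk0 hk1 hu, pval_unit_mul_pow hk0 hk1 hu]
  omega

end Valuation

theorem associated_det_of_mul_eq_mul {A : Type*} [CommRing A] {n : ℕ}
    {X Y M N : Matrix (Fin n) (Fin n) A} (hX : IsUnit X) (hY : IsUnit Y)
    (h : X * M = N * Y) : Associated M.det N.det := by
  have hdet := congrArg det h
  rw [det_mul, det_mul] at hdet
  exact (associated_unit_mul_left _ _ ((isUnit_iff_isUnit_det X).mp hX)).symm.trans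
    (hdet ▸ associated_mul_unit_left _ _ ((isUnit_iff_isUnit_det Y).mp hY))

theorem det_pow_one_pow_mul {A : Type*} [CommRing A] (π : A) (i l : ℕ) (a : A) :
    !![π ^ i, 1; π ^ (i + l) * a, π ^ l].det = -(π ^ (i + l) * (a - 1)) := by
  rw [det_fin_two_of, pow_add]
  ring

theorem stmt17_general {A : Type*} [CommRing A] [IsLocalRing A]
    (π : A) (k i l : ℕ) (hmax : IsLocalRing.maximalIdeal A = Ideal.span {π})
    (hk0 : π ^ k = 0) (hk1 : π ^ (k - 1) ≠ 0)
    (hil : i + l < k)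
    (a a' : A)
    (h : ∃ X Y : Matrix (Fin 2) (Fin 2) A, IsUT X ∧ IsUT Y ∧
      X * !![π ^ i, 1; π ^ (i + l) * a, π ^ l] =
        !![π ^ i, 1; π ^ (i + l) * a', π ^ l] * Y) :
    min (k - i - l) (pval π k (a - 1)) = min (k - i - l) (pval π k (a' - 1)) := by
  obtain ⟨X, Y, hX, hY, heq⟩ := h
  have hassoc := associated_det_of_mul_eq_mul hX.2 hY.2 heq
  rw [det_pow_one_pow_mul, det_pow_one_pow_mul, Associated.neg_left_iff,
    Associated.neg_right_iff] at hassoc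
  have hval := hassoc.pval_eq (π := π) (k := k)
  rw [pval_pow_mul hmax hk0 hk1, pval_pow_mul hmax hk0 hk1] at hval
  omega

theorem stmt17 {A : Type*} [CommRing A] [IsLocalRing A] [IsPrincipalIdealRing A]
    (π : A) (k i l : ℕ) (hmax : IsLocalRing.maximalIdeal A = Ideal.span {π})
    (hk0 : π ^ k = 0) (hk1 : π ^ (k - 1) ≠ 0)
    (hil : i + l < k) (hi : 0 < i) (hl : 0 < l)
    (a a' : A) (ha : IsUnit a) (ha' : IsUnit a')
    (h : ∃ X Y : Matrix (Fin 2) (Fin 2) A, IsUT X ∧ IsUT Y ∧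
      X * !![π ^ i, 1; π ^ (i + l) * a, π ^ l] =
        !![π ^ i, 1; π ^ (i + l) * a', π ^ l] * Y) :
    min (k - i - l) (pval π k (a - 1)) = min (k - i - l) (pval π k (a' - 1)) :=
  stmt17_general π k i l hmax hk0 hk1 hil a a' h
end
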